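/- arXiv:1905.12360 — 13 statements merged into one kernel-verified Lean document; each statement's English description precedes it below -/
import Mathlib

section
/- Let m ≥ 0, 1 ≤ b ≤ p-1, and r > m with r ≡ a mod (p-1) where 1 ≤ a ≤ p-1. Then ∑_{0 ≤ l ≤ r, l ≡ b mod (p-1)} C(r,l)·C(l,m) ≡ C(r,m)·C([a-m],[b-m]) + C(r,m)·δ mod p, where δ = 1 if [b-m] = p-1 and δ = 0 otherwise. -/
/-!
Over `𝔽_p` the power sum `∑_{x ∈ 𝔽_p^×} x ^ i` is `-1` when `p - 1 ∣ i` and `0` otherwise, so a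
binomial sum over a residue class `c` mod `p - 1` is a character sum:
`∑_{j ≡ c} C(n, j) = -∑_{x ∈ 𝔽_p^×} x ^ (p - 1 - c) (1 + x) ^ n`.
As `y ^ n` only depends on `n` mod `p - 1` once `n ≥ 1`, the exponent `n = r - m` may be replaced by its
representative `A ∈ {1, …, p - 1}`, and for `n = A` the class of `B` meets `{0, …, A}` only in `B`
(and in `0` when `B = p - 1`). The factor `C(r, m)` comes from `C(r, l) C(l, m) = C(r, m) C(r - m, l - m)`.
-/

open Finset

namespace Nat

theorem modEq_iff_dvd_add_sub {q l b : ℕ} (hb : b ≤ q) : l ≡ b [MOD q] ↔ q ∣ l + (q - b) := by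
  rw [← add_modEq_right_iff, show l + (q - b) + b = l + q by omega]
  simp only [ModEq, add_mod_right]

theorem dvd_add_sub_iff_eq {q j b : ℕ} (hj : 0 < j) (hjq : j ≤ q) (hb : 0 < b) (hbq : b ≤ q) :
    q ∣ j + (q - b) ↔ j = b := by
  refine ⟨fun ⟨c, hc⟩ => ?_, fun h => ⟨1, by omega⟩⟩
  rcases c with _ | _ | c
  · omega
  · omega
  · have : 2 * q ≤ q * (c + 1 + 1) := by nlinarith
    omega

theorem sum_range_choose_ite_dvd_add_sub {R : Type*} [AddCommMonoidWithOne R] {q a b : ℕ}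
    (ha : a ≤ q) (hb : 0 < b) (hbq : b ≤ q) :
    ∑ j ∈ range (a + 1), (if q ∣ j + (q - b) then (a.choose j : R) else 0) =
      a.choose b + if b = q then 1 else 0 := by
  have hzero : q ∣ 0 + (q - b) ↔ b = q :=
    ⟨fun h => by have := eq_zero_of_dvd_of_lt h (by omega); omega, fun h => by simp [h]⟩
  rw [sum_subset (range_subset_range.mpr (by omega : a + 1 ≤ q + 1)) fun j _ hj => by
      rw [choose_eq_zero_of_lt (by simpa using hj), cast_zero, ite_self],
    sum_range_succ']
  simp only [hzero, choose_zero_right, cast_one]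
  rw [sum_eq_single (b - 1)]
  · rw [if_pos ((dvd_add_sub_iff_eq (succ_pos _) (by omega) hb hbq).mpr (by omega)),
      Nat.sub_add_cancel hb]
  · intro j hj hjb
    rw [if_neg (by rw [dvd_add_sub_iff_eq (succ_pos _) (by simpa using hj) hb hbq]; omega)]
  · intro h; exact absurd (mem_range.mpr (by omega)) h

theorem sum_range_choose_mul_choose_mul {R : Type*} [CommSemiring R] (f : ℕ → R) {m r : ℕ}
    (h : m ≤ r) :
    ∑ l ∈ range (r + 1), (r.choose l : R) * l.choose m * f l =
      r.choose m * ∑ j ∈ range (r - m + 1), ((r - m).choose j : R) * f (m + j) := by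
  rw [range_eq_Ico, ← sum_Ico_consecutive _ (zero_le m) (by omega : m ≤ r + 1),
    sum_eq_zero fun l hl => by rw [choose_eq_zero_of_lt (mem_Ico.mp hl).2]; simp,
    zero_add, sum_Ico_eq_sum_range, show r + 1 - m = r - m + 1 by omega, mul_sum]
  refine sum_congr rfl fun j _ => ?_
  rw [← mul_assoc, ← cast_mul, choose_mul (le_add_right m j), Nat.add_sub_cancel_left, cast_mul]

end Nat

namespace FiniteField

variable {K : Type*} [Field K] [Fintype K]

theorem pow_eq_pow_of_modEq_card_sub_one (x : K) {a b : ℕ}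
    (h : a ≡ b [MOD Fintype.card K - 1]) (ha : a ≠ 0) (hb : b ≠ 0) : x ^ a = x ^ b := by
  rcases eq_or_ne x 0 with rfl | hx
  · rw [zero_pow ha, zero_pow hb]
  · exact pow_eq_pow_of_modEq h (pow_card_sub_one_eq_one x hx)

theorem sum_units_pow_mul_one_add_pow [DecidableEq K] (k n : ℕ) :
    ∑ x : Kˣ, (x : K) ^ k * (1 + x) ^ n =
      -∑ j ∈ range (n + 1), if Fintype.card K - 1 ∣ j + k then (n.choose j : K) else 0 := by
  simp_rw [add_comm (1 : K), add_pow, one_pow, mul_one, mul_sum]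
  rw [sum_comm, ← sum_neg_distrib]
  refine sum_congr rfl fun j _ => ?_
  simp_rw [← mul_assoc, ← pow_add, ← sum_mul, add_comm k, sum_pow_units]
  split_ifs <;> simp

end FiniteField

theorem stmt_2_general (p : ℕ) [Fact p.Prime] (m b r a A B : ℕ)
    (hb2 : b ≤ p - 1) (hmr : m < r) (hra : r % (p - 1) = a % (p - 1))
    (hA1 : 1 ≤ A) (hA2 : A ≤ p - 1) (hA : (A : ℤ) ≡ (a : ℤ) - (m : ℤ) [ZMOD ((p : ℤ) - 1)])
    (hB1 : 1 ≤ B) (hB2 : B ≤ p - 1) (hB : (B : ℤ) ≡ (b : ℤ) - (m : ℤ) [ZMOD ((p : ℤ) - 1)]) :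
    (∑ l ∈ Finset.range (r + 1),
        if l % (p - 1) = b % (p - 1) then (r.choose l * l.choose m : ZMod p) else 0) =
      (r.choose m : ZMod p) * (A.choose B : ZMod p) +
        (r.choose m : ZMod p) * (if B = p - 1 then 1 else 0) := by
  have hq : Fintype.card (ZMod p) - 1 = p - 1 := by rw [ZMod.card]
  have hcast : ((p - 1 : ℕ) : ℤ) = (p : ℤ) - 1 := by
    have := (Fact.out : p.Prime).one_le; push_cast [Nat.cast_sub this]; ring
  rw [← hcast] at hA hB
  have hexp : m + (p - 1 - b) ≡ p - 1 - B [MOD p - 1] := by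
    rw [← Int.natCast_modEq_iff]
    push_cast [Nat.cast_sub hb2, Nat.cast_sub hB2]
    have := (hB.sub_left ((p - 1 : ℕ) : ℤ)).symm
    rwa [show ((p - 1 : ℕ) : ℤ) - (b - m) = m + ((p - 1 : ℕ) - b) by ring] at this
  have hdeg : r - m ≡ A [MOD p - 1] := by
    rw [← Int.natCast_modEq_iff, Nat.cast_sub hmr.le]
    exact ((Int.natCast_modEq_iff.mpr hra).sub_right _).trans hA.symm
  calc _ = ∑ l ∈ Finset.range (r + 1), (r.choose l : ZMod p) * l.choose m *
        if p - 1 ∣ l + (p - 1 - b) then 1 else 0 := by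
        simp only [mul_boole]
        exact sum_congr rfl fun l _ => if_congr (Nat.modEq_iff_dvd_add_sub hb2) rfl rfl
    _ = r.choose m * -∑ x : (ZMod p)ˣ, (x : ZMod p) ^ (m + (p - 1 - b)) * (1 + x) ^ (r - m) := by
        rw [Nat.sum_range_choose_mul_choose_mul _ hmr.le,
          FiniteField.sum_units_pow_mul_one_add_pow, neg_neg, hq]
        simp only [mul_boole, add_assoc, add_left_comm m]
    _ = r.choose m * -∑ x : (ZMod p)ˣ, (x : ZMod p) ^ (p - 1 - B) * (1 + x) ^ A := by
        congr 2
        refine sum_congr rfl fun x _ => ?_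
        rw [pow_eq_pow_of_modEq hexp (ZMod.pow_card_sub_one_eq_one x.ne_zero),
          FiniteField.pow_eq_pow_of_modEq_card_sub_one _ (hq ▸ hdeg : r - m ≡ A [MOD _])
            (by omega) (by omega)]
    _ = _ := by
        rw [FiniteField.sum_units_pow_mul_one_add_pow, neg_neg, hq,
          Nat.sum_range_choose_ite_dvd_add_sub hA2 hB1 hB2, mul_add]

/-- Lemma on binomial sums: for `m ≥ 0`, `1 ≤ b ≤ p-1`, `r > m`, `r ≡ a mod (p-1)` with
`1 ≤ a ≤ p-1`, and `A = [a-m]`, `B = [b-m]` the representatives in `{1,…,p-1}` of `a-m`,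
`b-m` mod `(p-1)`:
`∑_{0 ≤ l ≤ r, l ≡ b mod (p-1)} C(r,l)C(l,m) ≡ C(r,m)·C(A,B) + C(r,m)·δ_{B,p-1} mod p`. -/
theorem stmt_2 (p : ℕ) [Fact p.Prime] (m b r a A B : ℕ)
    (hb1 : 1 ≤ b) (hb2 : b ≤ p - 1) (hmr : m < r)
    (ha1 : 1 ≤ a) (ha2 : a ≤ p - 1) (hra : r % (p - 1) = a % (p - 1))
    (hA1 : 1 ≤ A) (hA2 : A ≤ p - 1) (hA : (A : ℤ) ≡ (a : ℤ) - (m : ℤ) [ZMOD ((p : ℤ) - 1)])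
    (hB1 : 1 ≤ B) (hB2 : B ≤ p - 1) (hB : (B : ℤ) ≡ (b : ℤ) - (m : ℤ) [ZMOD ((p : ℤ) - 1)]) :
    (∑ l ∈ Finset.range (r + 1),
        if l % (p - 1) = b % (p - 1) then (r.choose l * l.choose m : ZMod p) else 0) =
      (r.choose m : ZMod p) * (A.choose B : ZMod p) +
        (r.choose m : ZMod p) * (if B = p - 1 then 1 else 0) :=
  stmt_2_general p m b r a A B hb2 hmr hra hA1 hA2 hA hB1 hB2 hB
end

section
/- Let p ≤ r and write r = r_m p^m + ... + r_1 p + r_0 in base p. Then for every 0 ≤ b ≤ r_0 and every 1 ≤ u ≤ Σ_p(r) - r_0, there exists an integer s with p ≤ s ≤ r, s ≡ b mod p, Σ_p(s) = b + u, and C(r,s) ≢ 0 mod p. Moreover, if u < Σ_p(r) - r_0, then s can be chosen with s ≤ r - p. -/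
/-!
By Lucas' theorem, `C(r, s) ≢ 0 mod p` as soon as every base-`p` digit of `s` is at most the
corresponding digit of `r`. Take `s = b + p t`: the last digit `b ≤ r₀` is harmless, and `t` is
built digit by digit below `r / p`, greedily from the bottom, so that its digit sum is exactly `u`.
If `u < Σ_p(r / p)` then `t ≠ r / p`, hence `t < r / p` and `s ≤ r - p`.
-/

namespace Nat

variable {p : ℕ}

lemma digits_sum_add_mul (hp : 1 < p) {c : ℕ} (hc : c < p) (t : ℕ) :
    (p.digits (c + p * t)).sum = c + (p.digits t).sum := by
  rcases eq_or_ne c 0 with rfl | hc0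
  · rcases eq_or_ne t 0 with rfl | ht0
    · simp
    · rw [digits_add p hp 0 t hc (.inr ht0), List.sum_cons]
  · rw [digits_add p hp c t hc (.inl hc0), List.sum_cons]

lemma digits_sum_eq_mod_add_div (hp : 1 < p) (n : ℕ) :
    (p.digits n).sum = n % p + (p.digits (n / p)).sum := by
  conv_lhs => rw [← mod_add_div n p]
  exact digits_sum_add_mul hp (mod_lt n (by omega)) _

lemma choose_add_mul_cast_zmod [Fact p.Prime] (n : ℕ) {c : ℕ} (hc : c < p) (t : ℕ) :
    (n.choose (c + p * t) : ZMod p) = (n % p).choose c * (n / p).choose t := by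
  have hp : 0 < p := (Fact.out : p.Prime).pos
  have hmod : (c + p * t) % p = c := by rw [add_mul_mod_self_left, mod_eq_of_lt hc]
  have hdiv : (c + p * t) / p = t := by rw [add_mul_div_left _ _ hp, div_eq_of_lt hc, zero_add]
  have lucas := Choose.choose_modEq_choose_mod_mul_choose_div_nat (n := n) (k := c + p * t) (p := p)
  rw [hmod, hdiv] at lucas
  exact_mod_cast (ZMod.natCast_eq_natCast_iff _ _ _).mpr lucas

lemma choose_cast_zmod_ne_zero_of_lt (hp : p.Prime) {a c : ℕ} (ha : a < p) (hc : c ≤ a) :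
    (a.choose c : ZMod p) ≠ 0 := by
  rw [Ne, ZMod.natCast_eq_zero_iff, ← hp.coprime_iff_not_dvd]
  exact hp.coprime_choose_of_lt ha hc

lemma le_of_choose_cast_ne_zero {R : Type*} [AddMonoidWithOne R] {n k : ℕ}
    (h : (n.choose k : R) ≠ 0) : k ≤ n := by
  by_contra! hlt
  exact h (by rw [choose_eq_zero_of_lt hlt, cast_zero])

theorem exists_digits_sum_eq_choose_cast_ne_zero [Fact p.Prime] (q : ℕ) {u : ℕ}
    (hu : u ≤ (p.digits q).sum) : ∃ t, (p.digits t).sum = u ∧ (q.choose t : ZMod p) ≠ 0 := by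
  have hp : p.Prime := Fact.out
  induction q using Nat.strong_induction_on generalizing u with
  | _ q ih =>
    rcases eq_or_ne q 0 with rfl | hq
    · exact ⟨0, by simp_all, by simp⟩
    rw [digits_sum_eq_mod_add_div hp.one_lt] at hu
    have hc : min u (q % p) < p := (min_le_right _ _).trans_lt (mod_lt q hp.pos)
    obtain ⟨t, ht, hchoose⟩ :=
      ih (q / p) (div_lt_self (by omega) hp.one_lt) (u := u - min u (q % p)) (by omega)
    refine ⟨min u (q % p) + p * t, ?_, ?_⟩
    · rw [digits_sum_add_mul hp.one_lt hc, ht]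
      omega
    · rw [choose_add_mul_cast_zmod q hc]
      exact mul_ne_zero
        (choose_cast_zmod_ne_zero_of_lt hp (mod_lt q hp.pos) (min_le_right _ _)) hchoose

end Nat

theorem stmt_3_general (p r : ℕ) (hp : p.Prime) (b u : ℕ)
    (hb : b ≤ r % p) (hu1 : 1 ≤ u) (hu2 : u ≤ (Nat.digits p r).sum - r % p) :
    ∃ s : ℕ, p ≤ s ∧ s ≤ r ∧ s % p = b ∧ (Nat.digits p s).sum = b + u ∧
      (r.choose s : ZMod p) ≠ 0 ∧
      (u < (Nat.digits p r).sum - r % p → s ≤ r - p) := by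
  have := Fact.mk hp
  have hbp : b < p := hb.trans_lt (Nat.mod_lt r hp.pos)
  rw [Nat.digits_sum_eq_mod_add_div hp.one_lt, Nat.add_sub_cancel_left] at hu2 ⊢
  obtain ⟨t, ht, hchoose⟩ := Nat.exists_digits_sum_eq_choose_cast_ne_zero (r / p) hu2
  have htr : t ≤ r / p := Nat.le_of_choose_cast_ne_zero hchoose
  have ht0 : t ≠ 0 := by rintro rfl; simp at ht; omega
  have hbound : ∀ k ≤ r / p, b + p * k ≤ r := fun k hk ↦ calc
    b + p * k ≤ r % p + p * (r / p) := by gcongr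
    _ = r := Nat.mod_add_div r p
  refine ⟨b + p * t, ?_, hbound t htr, ?_, ?_, ?_, fun hlt ↦ ?_⟩
  · exact (Nat.le_mul_of_pos_right p (Nat.pos_of_ne_zero ht0)).trans (Nat.le_add_left _ _)
  · rw [Nat.add_mul_mod_self_left, Nat.mod_eq_of_lt hbp]
  · rw [Nat.digits_sum_add_mul hp.one_lt hbp, ht]
  · rw [Nat.choose_add_mul_cast_zmod r hbp]
    exact mul_ne_zero (Nat.choose_cast_zmod_ne_zero_of_lt hp (Nat.mod_lt r hp.pos) hb) hchoose
  · have hsucc : t + 1 ≤ r / p := lt_of_le_of_ne htr (by rintro rfl; omega)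
    have := hbound (t + 1) hsucc
    rw [Nat.mul_add_one] at this
    omega

/-- Choice of `s`: for `p ≤ r`, `0 ≤ b ≤ r_0` (the constant base-`p` digit of `r`) and
`1 ≤ u ≤ Σ_p(r) - r_0`, there is `s` with `p ≤ s ≤ r`, `s ≡ b mod p`, `Σ_p(s) = b + u` and
`C(r,s) ≢ 0 mod p`; moreover if `u < Σ_p(r) - r_0` then `s` can be chosen with `s ≤ r - p`. -/
theorem stmt_3 (p r : ℕ) (hp : p.Prime) (hr : p ≤ r) (b u : ℕ)
    (hb : b ≤ r % p) (hu1 : 1 ≤ u) (hu2 : u ≤ (Nat.digits p r).sum - r % p) :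
    ∃ s : ℕ, p ≤ s ∧ s ≤ r ∧ s % p = b ∧ (Nat.digits p s).sum = b + u ∧
      (r.choose s : ZMod p) ≠ 0 ∧
      (u < (Nat.digits p r).sum - r % p → s ≤ r - p) :=
  stmt_3_general p r hp b u hb hu1 hu2
end

section
/- Let r > p, let r_0 and r_1 be the digits of p^0 and p^1 in the base-p expansion of r. Then: (i) Σ_p(r-1) = Σ_p(r-p) if and only if r_0 ≠ 0 and r_1 ≠ 0; (ii) Σ_p(r-1) < Σ_p(r-p) if and only if r_1 = 0 and r_0 ≠ 0; (iii) Σ_p(r-1) > Σ_p(r-p) if and only if r_0 = 0. -/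
/-!
Legendre's formula `(p - 1) v_p(n!) = n - Σ_p(n)` applied to `n! = n (n - 1)!` gives
`Σ_p(n - 1) + 1 = Σ_p(n) + (p - 1) v_p(n)`. Writing `r = r₀ + p q`, so that `r - p = r₀ + p (q - 1)`,
this yields `Σ_p(r - 1) + (p - 1) v_p(q) = Σ_p(r - p) + (p - 1) v_p(r)`. If `r₀ = 0` then
`v_p(r) = v_p(q) + 1`; otherwise `v_p(r) = 0`, and `v_p(q) = 0` exactly when `r₁ = q % p ≠ 0`.
-/

open Nat

theorem Nat.digits_sum_sub_one_add_one {p n : ℕ} [Fact p.Prime] (hn : n ≠ 0) :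
    (p.digits (n - 1)).sum + 1 = (p.digits n).sum + (p - 1) * padicValNat p n := by
  have hfact : (p - 1) * padicValNat p n ! =
      (p - 1) * padicValNat p n + (p - 1) * padicValNat p (n - 1)! := by
    rw [← Nat.mul_factorial_pred hn, padicValNat.mul hn (factorial_ne_zero _), Nat.mul_add]
  rw [sub_one_mul_padicValNat_factorial, sub_one_mul_padicValNat_factorial] at hfact
  have := digit_sum_le p n
  have := digit_sum_le p (n - 1)
  omega

theorem Nat.digits_sum_add_mul_s4 {b a q : ℕ} (hb : 1 < b) (ha : a < b) :
    (b.digits (a + b * q)).sum = a + (b.digits q).sum := by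
  rcases eq_or_ne a 0 with rfl | ha0
  · rcases eq_or_ne q 0 with rfl | hq0
    · simp
    · rw [Nat.digits_add b hb 0 q ha (Or.inr hq0), List.sum_cons]
  · rw [Nat.digits_add b hb a q ha (Or.inl ha0), List.sum_cons]

theorem Nat.digits_sum_sub_one_add_eq_digits_sum_sub_base_add {p r : ℕ} [hp : Fact p.Prime]
    (hr : p < r) :
    (p.digits (r - 1)).sum + (p - 1) * padicValNat p (r / p) =
      (p.digits (r - p)).sum + (p - 1) * padicValNat p r := by
  have hp1 := hp.out.one_lt
  have hq : r / p ≠ 0 := (Nat.div_pos hr.le (by omega)).ne'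
  have hr_eq : r = r % p + p * (r / p) := (Nat.mod_add_div r p).symm
  have hrp_eq : r - p = r % p + p * (r / p - 1) := by
    have := Nat.le_mul_of_pos_right p (Nat.pos_of_ne_zero hq)
    rw [Nat.mul_sub_one]
    omega
  have hr_sum := digits_sum_add_mul_s4 (q := r / p) hp1 (Nat.mod_lt r (by omega))
  have hrp_sum := digits_sum_add_mul_s4 (q := r / p - 1) hp1 (Nat.mod_lt r (by omega))
  rw [← hr_eq] at hr_sum
  rw [← hrp_eq] at hrp_sum
  have := digits_sum_sub_one_add_one (p := p) (by omega : r ≠ 0)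
  have := digits_sum_sub_one_add_one (p := p) hq
  omega

/-- Comparison of `Σ_p(r-1)` and `Σ_p(r-p)` in terms of the digits `r_0 = r % p` and
`r_1 = r / p % p` of the base-`p` expansion of `r > p`. -/
theorem stmt_4 (p r : ℕ) (hp : p.Prime) (hr : p < r) :
    ((Nat.digits p (r - 1)).sum = (Nat.digits p (r - p)).sum ↔ r % p ≠ 0 ∧ r / p % p ≠ 0) ∧
    ((Nat.digits p (r - 1)).sum < (Nat.digits p (r - p)).sum ↔ r / p % p = 0 ∧ r % p ≠ 0) ∧
    ((Nat.digits p (r - p)).sum < (Nat.digits p (r - 1)).sum ↔ r % p = 0) := by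
  have := Fact.mk hp
  have hp1 := hp.one_lt
  have key := digits_sum_sub_one_add_eq_digits_sum_sub_base_add hr
  by_cases hr0 : r % p = 0
  · have hdvd : p ∣ r := Nat.dvd_of_mod_eq_zero hr0
    have hv : padicValNat p (r / p) + 1 = padicValNat p r := by
      rw [padicValNat.div hdvd]
      have := one_le_padicValNat_of_dvd (by omega) hdvd
      omega
    rw [← hv, Nat.mul_add_one] at key
    omega
  · have hv : padicValNat p r = 0 := padicValNat.eq_zero_of_not_dvd (mt Nat.mod_eq_zero_of_dvd hr0)
    have hq : (p - 1) * padicValNat p (r / p) = 0 ↔ r / p % p ≠ 0 := by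
      rw [Nat.mul_eq_zero, padicValNat.eq_zero_iff, Nat.dvd_iff_mod_eq_zero]
      have : r / p ≠ 0 := (Nat.div_pos hr.le (by omega)).ne'
      omega
    rw [hv, mul_zero] at key
    omega
end

section
/- Let 1 ≤ i ≤ p-1 and p ≤ r, and let r_0 be the constant digit of the base-p expansion of r. If r_0 < i, then for every j with r_0 < j ≤ i one has Σ_p(r-j) = Σ_p(r-i) + (i - j). -/
/-! Since `r % p < j ≤ p`, subtracting `j` from `r` borrows exactly once from the units digit:
`r - j` has units digit `p + r % p - j` and higher part `r / p - 1`, the latter independent of `j`. -/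

namespace Nat

theorem digits_sum_add_mul_s5 {b x : ℕ} (hb : 1 < b) (hx : x < b) (y : ℕ) :
    (digits b (x + b * y)).sum = x + (digits b y).sum := by
  rcases eq_or_ne x 0 with rfl | hx0
  · rcases eq_or_ne y 0 with rfl | hy0
    · simp
    · rw [digits_add b hb 0 y hx (.inr hy0), List.sum_cons]
  · rw [digits_add b hb x y hx (.inl hx0), List.sum_cons]

theorem digits_sum_sub_of_mod_lt {b n k : ℕ} (hb : 1 < b) (hn : b ≤ n) (hk : n % b < k)
    (hkb : k ≤ b) : (digits b (n - k)).sum = (b + n % b - k) + (digits b (n / b - 1)).sum := by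
  have hq : 1 ≤ n / b := (one_le_div_iff (by omega)).mpr hn
  have hsplit : n - k = (b + n % b - k) + b * (n / b - 1) := by
    have hdiv := div_add_mod n b
    have hbq : b ≤ b * (n / b) := Nat.le_mul_of_pos_right b hq
    rw [Nat.mul_sub_one]
    omega
  rw [hsplit, digits_sum_add_mul_s5 hb (by omega)]

end Nat

theorem stmt_5_general (p r i : ℕ) (hi2 : i ≤ p - 1)
    (hr : p ≤ r) (h0 : r % p < i) (j : ℕ) (hj1 : r % p < j) (hj2 : j ≤ i) :
    (Nat.digits p (r - j)).sum = (Nat.digits p (r - i)).sum + (i - j) := by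
  have hp : 1 < p := by omega
  rw [Nat.digits_sum_sub_of_mod_lt hp hr hj1 (by omega),
    Nat.digits_sum_sub_of_mod_lt hp hr h0 (by omega)]
  omega

/-- If `1 ≤ i ≤ p-1`, `p ≤ r` and `r_0 = r % p < i`, then for every `j` with `r_0 < j ≤ i`,
`Σ_p(r-j) = Σ_p(r-i) + (i - j)`. -/
theorem stmt_5 (p r i : ℕ) (hp : p.Prime) (hi1 : 1 ≤ i) (hi2 : i ≤ p - 1)
    (hr : p ≤ r) (h0 : r % p < i) (j : ℕ) (hj1 : r % p < j) (hj2 : j ≤ i) :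
    (Nat.digits p (r - j)).sum = (Nat.digits p (r - i)).sum + (i - j) :=
  stmt_5_general p r i hi2 hr h0 j hj1 hj2
end

section
/- Let 1 ≤ i ≤ p-1 and p ≤ r with base-p expansion r = r_m p^m + ... + r_1 p + r_0, and suppose r_0 < i. If Σ_p(r-i) ≤ p-1, then r_1 ≠ 0, Σ_p(r-i) = Σ_p(r) + p - 1 - i, and Σ_p(r) ≥ r_0 + 1. -/
/-!
Write `r = p q + r₀`. Since `r₀ < i`, subtracting `i` borrows from the `p`-digit:
`r - i = p (q - 1) + (p - i + r₀)`, so `Σ_p(r - i) = (p - i + r₀) + Σ_p(q - 1)`. If the last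
digit of `q` were `0`, then `q - 1` would end in `p - 1` and
`Σ_p(r - i) ≥ p - i + r₀ + p - 1 > p - 1`. Hence `q` ends in a nonzero digit,
`Σ_p(q - 1) = Σ_p(q) - 1`, and the three claims follow.
-/

namespace Nat

variable {b : ℕ}

lemma digits_sum_eq_mod_add (hb : 1 < b) (n : ℕ) :
    (b.digits n).sum = n % b + (b.digits (n / b)).sum := by
  rcases n.eq_zero_or_pos with rfl | hn
  · simp
  · rw [digits_def' hb hn, List.sum_cons]

lemma digits_sum_mul_add (hb : 1 < b) (q : ℕ) {d : ℕ} (hd : d < b) :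
    (b.digits (b * q + d)).sum = d + (b.digits q).sum := by
  rw [digits_sum_eq_mod_add hb, mul_add_mod, mod_eq_of_lt hd, mul_add_div (by omega),
    div_eq_of_lt hd, add_zero]

lemma mod_le_digits_sum (hb : 1 < b) (n : ℕ) : n % b ≤ (b.digits n).sum := by
  rw [digits_sum_eq_mod_add hb]
  exact le_add_right _ _

lemma digits_sum_sub_one_add_one_s6 (hb : 1 < b) {n : ℕ} (hn : n % b ≠ 0) :
    (b.digits (n - 1)).sum + 1 = (b.digits n).sum := by
  have hlt := mod_lt n (zero_lt_of_lt hb)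
  have hsub : n - 1 = b * (n / b) + (n % b - 1) := by
    have := div_add_mod n b
    omega
  rw [hsub, digits_sum_mul_add hb _ (by omega), digits_sum_eq_mod_add hb n]
  omega

lemma sub_one_le_digits_sum_sub_one (hb : 1 < b) {n : ℕ} (hn : 0 < n) (hn0 : n % b = 0) :
    b - 1 ≤ (b.digits (n - 1)).sum := by
  obtain ⟨m, rfl⟩ := dvd_of_mod_eq_zero hn0
  have hm : 0 < m := pos_of_ne_zero (by rintro rfl; simp at hn)
  have hsub : b * m - 1 = b * (m - 1) + (b - 1) := by
    rw [Nat.mul_sub, mul_one]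
    have := Nat.le_mul_of_pos_right b hm
    omega
  rw [hsub, digits_sum_mul_add hb _ (by omega)]
  exact le_add_right _ _

end Nat

theorem stmt_6_general (p r i : ℕ) (hi2 : i ≤ p - 1)
    (hr : p ≤ r) (h0 : r % p < i) (hS : (Nat.digits p (r - i)).sum ≤ p - 1) :
    r / p % p ≠ 0 ∧
    (Nat.digits p (r - i)).sum = (Nat.digits p r).sum + (p - 1 - i) ∧
    r % p + 1 ≤ (Nat.digits p r).sum := by
  have hp : 1 < p := by omega
  have hq : 0 < r / p := Nat.div_pos hr (by omega)
  have hborrow : r - i = p * (r / p - 1) + (p - i + r % p) := by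
    have := Nat.div_add_mod r p
    rw [Nat.mul_sub, mul_one]
    have := Nat.le_mul_of_pos_right p hq
    omega
  have hSri : (p.digits (r - i)).sum = p - i + r % p + (p.digits (r / p - 1)).sum := by
    rw [hborrow, Nat.digits_sum_mul_add hp _ (by omega)]
  have hSr := Nat.digits_sum_eq_mod_add hp r
  have hq0 : r / p % p ≠ 0 := fun hq0 ↦ by
    have := Nat.sub_one_le_digits_sum_sub_one hp hq hq0
    omega
  have hSq := Nat.digits_sum_sub_one_add_one_s6 hp hq0
  have hSq' := Nat.mod_le_digits_sum hp (r / p)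
  exact ⟨hq0, by omega, by omega⟩

/-- If `1 ≤ i ≤ p-1`, `p ≤ r`, `r_0 = r % p < i` and `Σ_p(r-i) ≤ p-1`, then the linear digit
`r_1 = r / p % p` is nonzero, `Σ_p(r-i) = Σ_p(r) + p - 1 - i`, and `Σ_p(r) ≥ r_0 + 1`. -/
theorem stmt_6 (p r i : ℕ) (hp : p.Prime) (hi1 : 1 ≤ i) (hi2 : i ≤ p - 1)
    (hr : p ≤ r) (h0 : r % p < i) (hS : (Nat.digits p (r - i)).sum ≤ p - 1) :
    r / p % p ≠ 0 ∧
    (Nat.digits p (r - i)).sum = (Nat.digits p r).sum + (p - 1 - i) ∧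
    r % p + 1 ≤ (Nat.digits p r).sum :=
  stmt_6_general p r i hi2 hr h0 hS
end

section
/- Let r > p, 1 ≤ m ≤ p, and let F(X,Y) = ∑_{j=0}^{r} a_j X^{r-j}Y^j be a homogeneous polynomial of degree r over F_p. Then θ^m divides F in F_p[X,Y], where θ = X^p Y - X Y^p, if and only if: (i) a_j ≠ 0 implies m ≤ j ≤ r - m, and (ii) for all 0 ≤ i ≤ m-1 and all 1 ≤ l ≤ p-1, ∑_{j ≡ l mod (p-1)} C(j,i)·a_j = 0 in F_p. -/
/-!
Over `𝔽_q` the form `θ = X₀^q X₁ - X₀ X₁^q` is `-X₀ ∏_c (X₁ - c X₀)` (homogenize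
`∏_c (T - c) = T^q - T`), a product of pairwise non-associated primes, so `θ^m ∣ F` iff every
linear factor has its `m`-th power dividing `F`. Divisibility by `X₀^m` reads off the
coefficients of small `X₀`-degree. The shear `X₁ ↦ X₁ + c X₀` carries `X₁ - c X₀` to `X₁`, so
`(X₁ - c X₀)^m ∣ F` iff `∑_j C(j,i) c^(j-i) a_j = 0` for `i < m`. At `c = 0` this says `a_i = 0`;
for `c ≠ 0`, after multiplying by `c^i` and reducing exponents mod `q - 1`, it is a polynomial in
`c` of degree `< q - 1` vanishing on all of `𝔽_q^×`, whose coefficients are the residue-class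
sums of the statement.
-/

open MvPolynomial Finset Function

theorem Fintype.prod_pow_dvd_iff_of_pairwise_isRelPrime {α ι : Type*} [CommMonoid α]
    [DecompositionMonoid α] [Fintype ι] {f : ι → α} (hf : Pairwise (IsRelPrime on f)) {m : ℕ}
    {x : α} : (∏ i, f i) ^ m ∣ x ↔ ∀ i, f i ^ m ∣ x := by
  rw [← prod_pow]
  exact ⟨fun h i => (dvd_prod_of_mem _ (mem_univ i)).trans h,
    Fintype.prod_dvd_of_isRelPrime fun i j hij => (hf hij).pow⟩

theorem Nat.forall_lt_iff_forall_mod {n : ℕ} (hn : 0 < n) {P : ℕ → Prop} :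
    (∀ l < n, P l) ↔ ∀ l, 1 ≤ l → l ≤ n → P (l % n) := by
  refine ⟨fun h l _ _ => h _ (Nat.mod_lt l hn), fun h l hl => ?_⟩
  rcases Nat.eq_zero_or_pos l with rfl | hl0
  · simpa using h n hn le_rfl
  · simpa [Nat.mod_eq_of_lt hl] using h l hl0 hl.le

namespace MvPolynomial

variable {R : Type*}

theorem X_pow_dvd_iff {σ : Type*} [CommSemiring R] {i : σ} {n : ℕ} {φ : MvPolynomial σ R} :
    X i ^ n ∣ φ ↔ ∀ d, d i < n → coeff d φ = 0 := by
  classical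
  constructor
  · rintro ⟨ψ, rfl⟩ d hd
    rw [X_pow_eq_monomial, coeff_monomial_mul', if_neg (by rwa [Finsupp.single_le_iff, not_le])]
  · intro h
    rw [φ.as_sum, X_pow_eq_monomial]
    refine dvd_sum fun d _ => monomial_dvd_monomial.2 ⟨?_, one_dvd _⟩
    by_cases hd : d i < n
    · exact .inl (h d hd)
    · exact .inr (Finsupp.single_le_iff.2 (not_lt.1 hd))

section BinaryForm

variable [CommSemiring R]

noncomputable def binaryForm (r : ℕ) (a : ℕ → R) : MvPolynomial (Fin 2) R :=
  ∑ j ∈ range (r + 1), C (a j) * X 0 ^ (r - j) * X 1 ^ j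

theorem coeff_binaryForm (r : ℕ) (a : ℕ → R) (d : Fin 2 →₀ ℕ) :
    coeff d (binaryForm r a) = if d 0 + d 1 = r then a (d 1) else 0 := by
  classical
  have hterm : ∀ j ∈ range (r + 1), coeff d (C (a j) * X 0 ^ (r - j) * X 1 ^ j) =
      if j = d 1 ∧ d 0 + d 1 = r then a j else 0 := by
    intro j hj
    rw [mem_range] at hj
    rw [mul_assoc, X_pow_eq_monomial, X_pow_eq_monomial, monomial_mul, C_mul_monomial,
      coeff_monomial, one_mul, mul_one]
    congr 1
    rw [Finsupp.ext_iff, Fin.forall_fin_two]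
    simp only [Finsupp.add_apply, Finsupp.single_eq_same, Finsupp.single_eq_of_ne zero_ne_one,
      Finsupp.single_eq_of_ne one_ne_zero, add_zero, zero_add, eq_iff_iff]
    omega
  rw [binaryForm, coeff_sum, sum_congr rfl hterm]
  split_ifs with h
  · simp only [h, and_true, sum_ite_eq', mem_range]
    rw [if_pos (by omega)]
  · simp [h]

theorem X_one_pow_dvd_binaryForm_iff {m r : ℕ} {a : ℕ → R} :
    X 1 ^ m ∣ binaryForm r a ↔ ∀ j ≤ r, j < m → a j = 0 := by
  simp only [X_pow_dvd_iff, coeff_binaryForm]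
  refine ⟨fun h j hj hjm => ?_, fun h d hd => ?_⟩
  · have := h (Finsupp.single 0 (r - j) + Finsupp.single 1 j) (by simpa using hjm)
    simpa [if_pos (Nat.sub_add_cancel hj)] using this
  · split_ifs with hdr
    · exact h _ (by omega) hd
    · rfl

theorem X_zero_pow_dvd_binaryForm_iff {m r : ℕ} {a : ℕ → R} :
    X 0 ^ m ∣ binaryForm r a ↔ ∀ j ≤ r, r - j < m → a j = 0 := by
  simp only [X_pow_dvd_iff, coeff_binaryForm]
  refine ⟨fun h j hj hjm => ?_, fun h d hd => ?_⟩
  · have := h (Finsupp.single 0 (r - j) + Finsupp.single 1 j) (by simpa using hjm)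
    simpa [if_pos (Nat.sub_add_cancel hj)] using this
  · split_ifs with hdr
    · exact h _ (by omega) (by omega)
    · rfl

end BinaryForm

section Shear

variable [CommRing R]

noncomputable def shear (c : R) : MvPolynomial (Fin 2) R ≃ₐ[R] MvPolynomial (Fin 2) R :=
  AlgEquiv.ofAlgHom (aeval ![X 0, X 1 + C c * X 0]) (aeval ![X 0, X 1 - C c * X 0])
    (by ext i : 1; fin_cases i <;> simp)
    (by ext i : 1; fin_cases i <;> simp)

@[simp]
theorem shear_X_zero (c : R) : shear c (X 0) = X 0 := by simp [shear]

@[simp]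
theorem shear_X_one (c : R) : shear c (X 1) = X 1 + C c * X 0 := by simp [shear]

@[simp]
theorem shear_C (c b : R) : shear c (C b) = C b := (shear c).commutes b

theorem shear_binaryForm (c : R) (r : ℕ) (a : ℕ → R) :
    shear c (binaryForm r a) =
      binaryForm r (fun i => ∑ j ∈ range (r + 1), (j.choose i : R) * c ^ (j - i) * a j) := by
  simp only [binaryForm, map_sum, map_mul, map_pow, shear_X_zero, shear_X_one, shear_C, sum_mul]
  rw [sum_comm]
  refine sum_congr rfl fun j hj => ?_
  rw [mem_range] at hj
  rw [add_pow, mul_sum]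
  rw [← sum_subset (range_subset_range.2 (by omega : j + 1 ≤ r + 1)) fun i _ hi => by
    rw [mem_range, not_lt] at hi
    simp [Nat.choose_eq_zero_of_lt (by omega : j < i)]]
  refine sum_congr rfl fun i hi => ?_
  rw [mem_range] at hi
  rw [show r - i = (r - j) + (j - i) by omega, pow_add, map_natCast]
  ring

theorem X_one_sub_C_mul_X_zero_pow_dvd_binaryForm_iff {c : R} {m r : ℕ} {a : ℕ → R} :
    (X 1 - C c * X 0) ^ m ∣ binaryForm r a ↔
      ∀ i < m, ∑ j ∈ range (r + 1), (j.choose i : R) * c ^ (j - i) * a j = 0 := by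
  rw [← map_dvd_iff (shear c), map_pow, map_sub, map_mul, shear_X_one, shear_C, shear_X_zero,
    add_sub_cancel_right, shear_binaryForm, X_one_pow_dvd_binaryForm_iff]
  refine ⟨fun h i hi => ?_, fun h i _ hi => h i hi⟩
  by_cases hir : i ≤ r
  · exact h i hir hi
  · refine sum_eq_zero fun j hj => ?_
    rw [Nat.choose_eq_zero_of_lt (by rw [mem_range] at hj; omega), Nat.cast_zero, zero_mul,
      zero_mul]

theorem prime_X_one_sub_C_mul_X_zero [IsDomain R] (c : R) :
    Prime (X 1 - C c * X 0 : MvPolynomial (Fin 2) R) := by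
  have : shear (-c) (X 1) = X 1 - C c * X 0 := by simp [sub_eq_add_neg]
  rw [← this, MulEquiv.prime_iff]
  exact X_prime

end Shear

end MvPolynomial

namespace FiniteField

open Polynomial

variable {K : Type*} [Field K] [Fintype K]

theorem prod_X_sub_C_eq_X_pow_card_sub_X :
    ∏ c : K, (Polynomial.X - Polynomial.C c) = Polynomial.X ^ Fintype.card K - Polynomial.X := by
  have h := prod_multiset_X_sub_C_of_monic_of_roots_card_eq
    (p := (Polynomial.X ^ Fintype.card K - Polynomial.X : K[X])) ?_ ?_
  · rwa [roots_X_pow_card_sub_X] at h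
  · exact monic_X_pow_sub (by rw [degree_X]; exact_mod_cast Fintype.one_lt_card)
  · rw [roots_X_pow_card_sub_X, X_pow_card_sub_X_natDegree_eq K Fintype.one_lt_card]; rfl

theorem sum_mul_pow_eq_sum_mod {u : K} (hu : u ≠ 0) (s : Finset ℕ) (f : ℕ → K) :
    ∑ j ∈ s, f j * u ^ j =
      ∑ l ∈ range (Fintype.card K - 1),
        (∑ j ∈ s with j % (Fintype.card K - 1) = l, f j) * u ^ l := by
  have hq : 0 < Fintype.card K - 1 := by have := Fintype.one_lt_card (α := K); omega
  rw [← sum_fiberwise_of_maps_to fun j _ => mem_range.2 (Nat.mod_lt j hq)]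
  refine sum_congr rfl fun l _ => ?_
  rw [sum_mul]
  refine sum_congr rfl fun j hj => ?_
  rw [pow_eq_pow_mod j (pow_card_sub_one_eq_one u hu), (mem_filter.1 hj).2]

theorem forall_sum_mul_pow_eq_zero_iff {g : ℕ → K} :
    (∀ u : K, u ≠ 0 → ∑ l ∈ range (Fintype.card K - 1), g l * u ^ l = 0) ↔
      ∀ l < Fintype.card K - 1, g l = 0 := by
  refine ⟨fun h => ?_, fun h u _ => sum_eq_zero fun l hl => by rw [h l (mem_range.1 hl), zero_mul]⟩
  classical
  set P : K[X] := ∑ l ∈ range (Fintype.card K - 1), Polynomial.C (g l) * Polynomial.X ^ l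
  have hP : P = 0 := by
    refine eq_zero_of_degree_lt_of_eval_finset_eq_zero (univ.erase 0) ?_ fun u hu => ?_
    · rw [card_erase_of_mem (mem_univ _), card_univ, ← mem_degreeLT]
      exact sum_mem fun l hl => mem_degreeLT.2 <|
        (degree_C_mul_X_pow_le _ _).trans_lt (by exact_mod_cast mem_range.1 hl)
    · simpa [P, eval_finsetSum] using h u (ne_of_mem_erase hu)
  intro l hl
  simpa [P, finsetSum_coeff, coeff_C_mul_X_pow, hl] using congrArg (Polynomial.coeff · l) hP

theorem forall_sum_mul_pow_eq_zero_iff_sum_mod {s : Finset ℕ} {f : ℕ → K} :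
    (∀ u : K, u ≠ 0 → ∑ j ∈ s, f j * u ^ j = 0) ↔
      ∀ l < Fintype.card K - 1, ∑ j ∈ s with j % (Fintype.card K - 1) = l, f j = 0 := by
  rw [← forall_sum_mul_pow_eq_zero_iff]
  exact forall₂_congr fun u hu => by rw [sum_mul_pow_eq_sum_mod hu]

theorem forall_sum_choose_mul_pow_sub_eq_zero_iff {r i : ℕ} {a : ℕ → K} :
    (∀ c : K, ∑ j ∈ range (r + 1), (j.choose i : K) * c ^ (j - i) * a j = 0) ↔
      (i ≤ r → a i = 0) ∧ ∀ l < Fintype.card K - 1,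
        ∑ j ∈ range (r + 1) with j % (Fintype.card K - 1) = l, (j.choose i : K) * a j = 0 := by
  have h_zero : ∑ j ∈ range (r + 1), (j.choose i : K) * 0 ^ (j - i) * a j = 0 ↔
      (i ≤ r → a i = 0) := by
    have hterm : ∀ j, (j.choose i : K) * 0 ^ (j - i) * a j = if i = j then a j else 0 := by
      intro j
      split_ifs with hij
      · simp [hij]
      · rcases lt_or_gt_of_ne hij with hij | hij
        · simp [zero_pow (Nat.sub_ne_zero_of_lt hij)]
        · simp [Nat.choose_eq_zero_of_lt hij]
    simp only [hterm, sum_ite_eq, mem_range, Nat.lt_succ_iff, ite_eq_right_iff]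
  have h_unit : ∀ c : K, c ≠ 0 →
      (∑ j ∈ range (r + 1), (j.choose i : K) * c ^ (j - i) * a j = 0 ↔
        ∑ j ∈ range (r + 1), (j.choose i : K) * a j * c ^ j = 0) := by
    intro c hc
    have : ∑ j ∈ range (r + 1), (j.choose i : K) * a j * c ^ j =
        c ^ i * ∑ j ∈ range (r + 1), (j.choose i : K) * c ^ (j - i) * a j := by
      rw [mul_sum]
      refine sum_congr rfl fun j _ => ?_
      rcases le_or_gt i j with hij | hij
      · rw [← Nat.add_sub_cancel' hij, pow_add, Nat.add_sub_cancel_left]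
        ring
      · simp [Nat.choose_eq_zero_of_lt hij]
    rw [this, mul_eq_zero, or_iff_right (pow_ne_zero i hc)]
  rw [← forall_sum_mul_pow_eq_zero_iff_sum_mod, ← forall₂_congr h_unit, ← h_zero]
  exact ⟨fun h => ⟨h 0, fun c _ => h c⟩,
    fun h c => (eq_or_ne c 0).elim (fun hc => hc ▸ h.1) (h.2 c)⟩

end FiniteField

namespace MvPolynomial

variable {K : Type*} [Field K]

noncomputable def linearFactor : Option K → MvPolynomial (Fin 2) K
  | none => X 0
  | some c => X 1 - C c * X 0

theorem prime_linearFactor : ∀ o : Option K, Prime (linearFactor o)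
  | none => X_prime
  | some c => prime_X_one_sub_C_mul_X_zero c

theorem pairwise_isRelPrime_linearFactor : Pairwise (IsRelPrime on (linearFactor (K := K))) := by
  intro o o' hne
  rw [Function.onFun, (prime_linearFactor o).irreducible.isRelPrime_iff_not_dvd]
  rintro ⟨g, hg⟩
  -- `linearFactor o` vanishes at this point and no other factor does.
  have := congrArg (eval (o.elim ![0, 1] fun c => ![1, c])) hg
  cases o <;> cases o' <;> simp [linearFactor, sub_eq_zero] at this hne
  exact hne this

variable [Fintype K]

variable (K) in
noncomputable def dicksonTheta : MvPolynomial (Fin 2) K :=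
  X 0 ^ Fintype.card K * X 1 - X 0 * X 1 ^ Fintype.card K

theorem dicksonTheta_eq_neg_prod_linearFactor : dicksonTheta K = -∏ o, linearFactor o := by
  have h := Polynomial.homogenize_finsetProd (s := univ)
    (p := fun c : K => Polynomial.X - Polynomial.C c) (n := fun _ => 1)
    fun c _ => Polynomial.natDegree_X_sub_C_le c
  simp only [FiniteField.prod_X_sub_C_eq_X_pow_card_sub_X, sum_const, card_univ, smul_eq_mul,
    mul_one] at h
  -- `homogenize` uses `X 1` as the homogenizing variable; we need `X 0` in that role.
  replace h := congrArg (rename (Equiv.swap (0 : Fin 2) 1)) h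
  simp only [Polynomial.homogenize_sub, Polynomial.homogenize_X_pow le_rfl, tsub_self, pow_zero,
    mul_one, Polynomial.homogenize_X Fintype.card_ne_zero, Polynomial.homogenize_X one_ne_zero,
    Polynomial.homogenize_C, pow_one, map_sub, map_pow, map_mul, map_prod, rename_X, rename_C,
    Equiv.swap_apply_left, Equiv.swap_apply_right] at h
  simp only [dicksonTheta, Fintype.prod_option, linearFactor]
  rw [← h, ← mul_pow_sub_one Fintype.card_ne_zero (X 0 : MvPolynomial (Fin 2) K)]
  ring

theorem dicksonTheta_pow_dvd_iff {m : ℕ} {F : MvPolynomial (Fin 2) K} :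
    dicksonTheta K ^ m ∣ F ↔ X 0 ^ m ∣ F ∧ ∀ c : K, (X 1 - C c * X 0) ^ m ∣ F := by
  rw [dicksonTheta_eq_neg_prod_linearFactor,
    (Associated.refl _).neg_left.pow_pow.dvd_iff_dvd_left,
    Fintype.prod_pow_dvd_iff_of_pairwise_isRelPrime pairwise_isRelPrime_linearFactor,
    Option.forall]
  rfl

end MvPolynomial

theorem stmt_7_general (p r m : ℕ) [Fact p.Prime] (a : ℕ → ZMod p) :
    (((X 0 : MvPolynomial (Fin 2) (ZMod p)) ^ p * X 1 - X 0 * X 1 ^ p) ^ m ∣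
        ∑ j ∈ Finset.range (r + 1), C (a j) * X 0 ^ (r - j) * X 1 ^ j) ↔
      ((∀ j ≤ r, a j ≠ 0 → m ≤ j ∧ j ≤ r - m) ∧
        ∀ i < m, ∀ l, 1 ≤ l → l ≤ p - 1 →
          (∑ j ∈ Finset.range (r + 1),
              if j % (p - 1) = l % (p - 1) then (j.choose i : ZMod p) * a j else 0) = 0) := by
  have hp : 0 < p - 1 := Nat.sub_pos_of_lt (Fact.out : p.Prime).one_lt
  have hθ : dicksonTheta (ZMod p) = X 0 ^ p * X 1 - X 0 * X 1 ^ p := by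
    rw [dicksonTheta, ZMod.card]
  change _ ∣ binaryForm r a ↔ _
  simp only [← hθ, dicksonTheta_pow_dvd_iff, X_zero_pow_dvd_binaryForm_iff,
    X_one_sub_C_mul_X_zero_pow_dvd_binaryForm_iff, forall_comm (α := ZMod p), ← imp_forall_iff,
    FiniteField.forall_sum_choose_mul_pow_sub_eq_zero_iff, ZMod.card, imp_and, forall_and,
    Nat.forall_lt_iff_forall_mod hp, sum_filter, ← and_assoc]
  refine and_congr ⟨?_, ?_⟩ Iff.rfl
  · rintro ⟨h_high, h_low⟩
    exact ⟨fun j hj hne => not_lt.1 fun hjm => hne (h_low j hjm hj),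
      fun j hj hne => not_lt.1 fun hjr => hne (h_high j hj (by omega))⟩
  · rintro ⟨h_low, h_high⟩
    refine ⟨fun j hj hjm => not_not.1 fun hne => ?_, fun j hjm hj => not_not.1 fun hne => ?_⟩
    · have := h_low j hj hne
      have := h_high j hj hne
      omega
    · exact (h_low j hj hne).not_gt hjm

/-- Divisibility criterion by `θ^m`, `θ = X^pY - XY^p`: for `r > p`, `1 ≤ m ≤ p` and
`F = ∑_{j=0}^r a_j X^{r-j}Y^j`, `θ^m ∣ F` iff (i) `a_j ≠ 0 → m ≤ j ≤ r-m` and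
(ii) `∑_{j ≡ l mod (p-1)} C(j,i) a_j = 0` for all `0 ≤ i ≤ m-1`, `1 ≤ l ≤ p-1`. -/
theorem stmt_7 (p r m : ℕ) [Fact p.Prime] (hr : p < r) (hm1 : 1 ≤ m) (hm2 : m ≤ p)
    (a : ℕ → ZMod p) :
    (((X 0 : MvPolynomial (Fin 2) (ZMod p)) ^ p * X 1 - X 0 * X 1 ^ p) ^ m ∣
        ∑ j ∈ Finset.range (r + 1), C (a j) * X 0 ^ (r - j) * X 1 ^ j) ↔
      ((∀ j ≤ r, a j ≠ 0 → m ≤ j ∧ j ≤ r - m) ∧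
        ∀ i < m, ∀ l, 1 ≤ l → l ≤ p - 1 →
          (∑ j ∈ Finset.range (r + 1),
              if j % (p - 1) = l % (p - 1) then (j.choose i : ZMod p) * a j else 0) = 0) :=
  stmt_7_general p r m a
end

section
/- Let 0 ≤ i ≤ j ≤ a ≤ p-1. Then the (i+1)×(i+1) matrix whose (m,n)-entry, for 0 ≤ m,n ≤ i, is the binomial coefficient C(a-n, j-m) reduced modulo p, is invertible over F_p. -/
/-!
If `v` lies in the kernel of the matrix, the entries of `M v` are the coefficients of
`X^(j-i), …, X^j` in `P = ∑ₙ vₙ (X+1)^(a-n)`. So `P` is a polynomial of degree `≤ a < p` with at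
most `a - i` nonzero coefficients, divisible by `(X+1)^(a-i)`, and it is nonzero when `v` is
(substitute `X ↦ X - 1`). This contradicts the sparsity bound: a nonzero polynomial of degree
`< char` divisible by `(X - c)^k`, `c` a unit, has more than `k` nonzero coefficients. For that,
divide out `X` when the constant term vanishes; otherwise differentiate, which loses the constant
term and one factor `X - c` while keeping the polynomial nonzero because its degree is `< char`.
-/

open Polynomial Finset

namespace Polynomial

section Semiring

variable {R : Type*} [Semiring R]

theorem card_support_X_mul (g : R[X]) : #(X * g).support = #g.support := by
  suffices (X * g).support = g.support.map (addRightEmbedding 1) by rw [this, card_map]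
  ext n
  rcases n with _ | n <;> simp [coeff_X_mul]

theorem card_support_derivative_lt {f : R[X]} (h0 : f.coeff 0 ≠ 0) :
    #(derivative f).support < #f.support := by
  have hsub : (derivative f).support.map (addRightEmbedding 1) ⊆ f.support.erase 0 := by
    intro n hn
    obtain ⟨m, hm, rfl⟩ := mem_map.mp hn
    exact mem_erase.mpr ⟨by simp, of_mem_support_derivative hm⟩
  calc #(derivative f).support ≤ #(f.support.erase 0) := by
        simpa only [card_map] using card_le_card hsub
    _ < #f.support := card_erase_lt_of_mem (mem_support_iff.mpr h0)

theorem card_support_le_of_coeff_eq_zero_of_mem_Icc {f : R[X]}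
    {a l u : ℕ} (hdeg : f.natDegree ≤ a) (hu : u ≤ a) (hgap : ∀ r ∈ Icc l u, f.coeff r = 0) :
    #f.support ≤ a + 1 - #(Icc l u) := by
  have hsub : f.support ⊆ range (a + 1) \ Icc l u := fun r hr => by
    rw [mem_support_iff] at hr
    have := le_natDegree_of_ne_zero hr
    exact mem_sdiff.mpr ⟨mem_range.mpr (by omega), fun hmem => hr (hgap r hmem)⟩
  calc #f.support ≤ #(range (a + 1) \ Icc l u) := card_le_card hsub
    _ = a + 1 - #(Icc l u) := by
      rw [card_sdiff_of_subset fun r hr => mem_range.mpr (by simp at hr; omega), card_range]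

end Semiring

section Domain

variable {R : Type*} [CommRing R] [IsDomain R] {p : ℕ} [CharP R p]

theorem derivative_ne_zero_of_natDegree_lt {f : R[X]} (h0 : f.natDegree ≠ 0)
    (hp : f.natDegree < p) : derivative f ≠ 0 := by
  intro hf
  have hcoeff := coeff_derivative f (f.natDegree - 1)
  rw [hf, coeff_zero, Nat.sub_add_cancel (Nat.pos_of_ne_zero h0), ← Nat.cast_add_one,
    Nat.sub_add_cancel (Nat.pos_of_ne_zero h0), eq_comm] at hcoeff
  rcases mul_eq_zero.mp hcoeff with hlc | hcast
  · exact leadingCoeff_ne_zero.mpr (ne_zero_of_natDegree_gt (Nat.pos_of_ne_zero h0)) hlc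
  · have := Nat.le_of_dvd (Nat.pos_of_ne_zero h0) ((CharP.cast_eq_zero_iff R p _).mp hcast)
    omega

theorem lt_card_support_of_pow_X_sub_C_dvd {c : R} (hc : IsUnit c) {f : R[X]} (hf : f ≠ 0)
    (hp : f.natDegree < p) {k : ℕ} (hdvd : (X - C c) ^ k ∣ f) : k < #f.support := by
  induction hN : f.natDegree using Nat.strong_induction_on generalizing f k with
  | _ N ih =>
    subst hN
    rcases k with _ | k
    · exact card_pos.mpr (support_nonempty.mpr hf)
    by_cases h0 : f.coeff 0 = 0
    · obtain ⟨g, rfl⟩ := X_dvd_iff.mpr h0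
      have hg : g ≠ 0 := right_ne_zero_of_mul hf
      have hcop : IsCoprime (X - C c) X := by
        have := isCoprime_X_sub_C_of_isUnit_sub (R := R) (a := c) (b := 0) (by rwa [sub_zero])
        rwa [C_0, sub_zero] at this
      have hdeg : (X * g).natDegree = g.natDegree + 1 := natDegree_X_mul hg
      rw [card_support_X_mul]
      exact ih g.natDegree (by omega) hg (by omega) (hcop.pow_left.dvd_of_dvd_mul_left hdvd) rfl
    · have hdeg : f.natDegree ≠ 0 := by
        have := natDegree_le_of_dvd hdvd hf
        rw [natDegree_pow, natDegree_X_sub_C] at this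
        omega
      have hlt := natDegree_derivative_lt hdeg
      have := ih _ hlt (derivative_ne_zero_of_natDegree_lt hdeg hp) (by omega)
        (pow_sub_one_dvd_derivative_of_pow_dvd hdvd) rfl
      have := card_support_derivative_lt h0
      omega

end Domain

section CommRing

variable {R ι : Type*} [CommRing R] [Fintype ι] (v : ι → R) (e : ι → ℕ)

theorem coeff_sum_C_mul_X_add_one_pow (r : ℕ) :
    (∑ n, C (v n) * (X + 1) ^ e n).coeff r = ∑ n, ((e n).choose r : R) * v n := by
  rw [finsetSum_coeff]
  exact sum_congr rfl fun n _ => by rw [coeff_C_mul, coeff_X_add_one_pow, mul_comm]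

theorem sum_C_mul_X_add_one_pow_comp_X_sub_one :
    (∑ n, C (v n) * (X + 1) ^ e n).comp (X - 1) = ∑ n, C (v n) * X ^ e n := by
  simp only [sum_comp, mul_comp, C_comp, pow_comp, add_comp, X_comp, one_comp, sub_add_cancel]

theorem eq_zero_of_sum_C_mul_X_add_one_pow_eq_zero {e : ι → ℕ} (he : Function.Injective e)
    (h : ∑ n, C (v n) * (X + 1) ^ e n = 0) : v = 0 := by
  funext m
  have := congrArg (coeff · (e m)) (sum_C_mul_X_add_one_pow_comp_X_sub_one v e)
  simp only [h, zero_comp, coeff_zero, finsetSum_coeff, coeff_C_mul_X_pow] at this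
  rwa [sum_eq_single_of_mem m (mem_univ m) fun n _ hn => if_neg (he.ne hn.symm), if_pos rfl,
    eq_comm] at this

end CommRing

end Polynomial

/-- For `0 ≤ i ≤ j ≤ a ≤ p-1`, the `(i+1)×(i+1)` matrix with `(m,n)`-entry
`C(a-n, j-m) mod p` is invertible over `F_p`. -/
theorem stmt_10 (p a i j : ℕ) [Fact p.Prime] (hij : i ≤ j) (hja : j ≤ a)
    (hap : a ≤ p - 1) :
    IsUnit (Matrix.of fun m n : Fin (i + 1) =>
      (((a - (n : ℕ)).choose (j - (m : ℕ)) : ℕ) : ZMod p)) := by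
  have hap' : a < p := by have := (Fact.out : p.Prime).one_lt; omega
  rw [Matrix.isUnit_iff_isUnit_det, isUnit_iff_ne_zero]
  intro hdet
  obtain ⟨v, hv, hMv⟩ := Matrix.exists_mulVec_eq_zero_iff.mpr hdet
  set P : (ZMod p)[X] := ∑ n : Fin (i + 1), C (v n) * (X + 1) ^ (a - n)
  have hP0 : P ≠ 0 := fun h => hv (eq_zero_of_sum_C_mul_X_add_one_pow_eq_zero v
    (fun m n hmn => Fin.ext (by have := m.isLt; have := n.isLt; omega)) h)
  have hdeg : P.natDegree ≤ a := natDegree_le_iff_coeff_eq_zero.mpr fun r hr => by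
    rw [coeff_sum_C_mul_X_add_one_pow]
    exact sum_eq_zero fun n _ => by
      rw [Nat.choose_eq_zero_of_lt (by omega), Nat.cast_zero, zero_mul]
  have hgap : ∀ r ∈ Icc (j - i) j, P.coeff r = 0 := fun r hr => by
    rw [mem_Icc] at hr
    rw [coeff_sum_C_mul_X_add_one_pow]
    simpa [Matrix.mulVec, dotProduct, Nat.sub_sub_self hr.2] using congrFun hMv ⟨j - r, by omega⟩
  have hdvd : (X - C (-1)) ^ (a - i) ∣ P := by
    rw [C_neg, C_1, sub_neg_eq_add]
    exact dvd_sum fun n _ => (pow_dvd_pow _ (by omega)).mul_left _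
  have hsparse := lt_card_support_of_pow_X_sub_C_dvd isUnit_one.neg hP0 (by omega) hdvd
  have hcard := card_support_le_of_coeff_eq_zero_of_mem_Icc hdeg hja hgap
  rw [Nat.card_Icc] at hcard
  omega
end

section
/- Let p ≤ r with r ≡ a mod (p-1) and 1 ≤ a ≤ n ≤ p-1. Then ∑_{0 < l < r, l ≡ a mod (p-1)} C(r,l)·C(l,n) ≡ δ_{n,a}·C(r,a) mod p, where δ_{n,a} = 1 if n = a and 0 otherwise. -/
/-!
Since `C(r,l) C(l,n) = C(r,n) C(r-n, l-n)` and the omitted terms `l = 0`, `l = r` contribute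
`0` and `C(r,n)`, the sum is `C(r,n)` times (the lacunary sum `∑_{k ≡ m} C(m,k)` minus one),
where `m = r - n` and congruences are mod `p - 1`. Orthogonality of the characters
`x ↦ x ^ k` of `(ZMod p)ˣ` writes the lacunary sum as `-∑ₓ x⁻ᵐ (1 + x)ᵐ`, which by Fermat
depends only on `m mod (p - 1)` once `m ≥ 1`. For `1 ≤ m ≤ p - 1` only `k = m` survives,
together with `k = 0` when `m = p - 1`; so the lacunary sum is `2` if `p - 1 ∣ r - n`, i.e. if
`n = a`, and `1` otherwise.
-/

open Finset

namespace Nat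

theorem dvd_add_iff_modEq {q b c k : ℕ} (h : q ∣ c + b) : q ∣ k + b ↔ k ≡ c [MOD q] := by
  rw [← modEq_zero_iff_dvd] at h ⊢
  exact ⟨fun hk => (hk.trans h.symm).add_right_cancel' b, fun hk => (hk.add_right b).trans h⟩

theorem sum_filter_choose_mul_choose (P : ℕ → Prop) [DecidablePred P] {r n : ℕ}
    (hnr : n ≤ r) :
    ∑ l ∈ range (r + 1) with P l, r.choose l * l.choose n =
      r.choose n * ∑ k ∈ range (r - n + 1) with P (n + k), (r - n).choose k := by
  rw [sum_filter, sum_filter, show r + 1 = n + (r - n + 1) by omega, sum_range_add, mul_sum,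
    sum_eq_zero fun l hl => by simp [choose_eq_zero_of_lt (mem_range.mp hl)], zero_add]
  refine sum_congr rfl fun k _ => ?_
  rw [choose_mul (le_add_right n k), Nat.add_sub_cancel_left, mul_ite, mul_zero]

theorem sum_choose_modEq_self_of_le {q m : ℕ} (hm : 0 < m) (hmq : m ≤ q) :
    ∑ k ∈ range (m + 1) with k ≡ m [MOD q], m.choose k = if m = q then 2 else 1 := by
  have hclass : ∀ k ∈ range m, k ≡ m [MOD q] ↔ k = 0 ∧ m = q := by
    intro k hk
    have hkm := mem_range.mp hk
    rw [modEq_iff_dvd' hkm.le]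
    constructor
    · rintro ⟨_ | _ | c, hc⟩
      · omega
      · omega
      · nlinarith [Nat.sub_le m k, Nat.zero_le (q * c)]
    · rintro ⟨rfl, rfl⟩
      simp
  rw [sum_filter, sum_range_succ, if_pos (ModEq.refl m), choose_self,
    sum_congr rfl fun k hk => if_congr (hclass k hk) rfl rfl]
  split_ifs with h
  · subst h
    simp [hm.ne']
  · simp [h]

end Nat

namespace ZMod

variable (p : ℕ) [Fact p.Prime]

theorem sum_units_sum_pow_mul {ι : Type*} (s : Finset ι) (e : ι → ℕ) (f : ι → ZMod p) :
    ∑ x : (ZMod p)ˣ, ∑ i ∈ s, (x : ZMod p) ^ e i * f i =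
      -∑ i ∈ s with p - 1 ∣ e i, f i := by
  rw [sum_comm, sum_filter, ← sum_neg_distrib]
  refine sum_congr rfl fun i _ => ?_
  rw [← sum_mul, FiniteField.sum_pow_units, ZMod.card]
  split_ifs <;> simp

variable {p}

theorem pow_eq_pow_of_modEq (z : ZMod p) {m m' : ℕ} (hm : m ≠ 0) (hm' : m' ≠ 0)
    (h : m ≡ m' [MOD p - 1]) : z ^ m = z ^ m' := by
  rcases eq_or_ne z 0 with rfl | hz
  · rw [zero_pow hm, zero_pow hm']
  · have hfin : IsOfFinOrder z :=
      isOfFinOrder_iff_pow_eq_one.mpr ⟨p - 1, Nat.sub_pos_of_lt (Fact.out : p.Prime).one_lt,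
        pow_card_sub_one_eq_one hz⟩
    exact hfin.pow_eq_pow_iff_modEq.mpr (h.of_dvd (orderOf_dvd_card_sub_one hz))

-- On units, `x ^ ((p - 2) * c) = x⁻¹ ^ c`: the character sum picks out the class of `c`.
theorem sum_choose_modEq_eq_neg_sum_units (c m : ℕ) :
    ∑ k ∈ range (m + 1) with k ≡ c [MOD p - 1], (m.choose k : ZMod p) =
      -∑ x : (ZMod p)ˣ, (x : ZMod p) ^ ((p - 2) * c) * (x + 1) ^ m := by
  have hb : p - 1 ∣ c + (p - 2) * c :=
    ⟨c, by rw [show p - 1 = p - 2 + 1 by have := (Fact.out : p.Prime).two_le; omega]; ring⟩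
  rw [filter_congr fun k _ => (Nat.dvd_add_iff_modEq hb).symm, ← neg_eq_iff_eq_neg,
    ← sum_units_sum_pow_mul]
  refine sum_congr rfl fun x _ => ?_
  rw [add_pow, mul_sum]
  refine sum_congr rfl fun k _ => ?_
  ring

theorem sum_choose_modEq_eq_of_modEq (c : ℕ) {m m' : ℕ} (hm : m ≠ 0) (hm' : m' ≠ 0)
    (h : m ≡ m' [MOD p - 1]) :
    ∑ k ∈ range (m + 1) with k ≡ c [MOD p - 1], (m.choose k : ZMod p) =
      ∑ k ∈ range (m' + 1) with k ≡ c [MOD p - 1], (m'.choose k : ZMod p) := by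
  rw [sum_choose_modEq_eq_neg_sum_units, sum_choose_modEq_eq_neg_sum_units]
  refine congrArg _ (sum_congr rfl fun x _ => ?_)
  rw [pow_eq_pow_of_modEq _ hm hm' h]

theorem sum_choose_modEq_self {m : ℕ} (hm : m ≠ 0) :
    ∑ k ∈ range (m + 1) with k ≡ m [MOD p - 1], (m.choose k : ZMod p) =
      if p - 1 ∣ m then 2 else 1 := by
  have hq : 0 < p - 1 := Nat.sub_pos_of_lt (Fact.out : p.Prime).one_lt
  obtain ⟨m', hm'pos, hm'q, hm'm⟩ : ∃ m', 0 < m' ∧ m' ≤ p - 1 ∧ m' ≡ m [MOD p - 1] :=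
    ⟨(m - 1) % (p - 1) + 1, Nat.succ_pos _, Nat.mod_lt _ hq, by
      simpa [Nat.sub_add_cancel (Nat.pos_of_ne_zero hm)] using
        (Nat.mod_modEq (m - 1) (p - 1)).add_right 1⟩
  have hdvd : p - 1 ∣ m ↔ m' = p - 1 := by
    rw [← hm'm.dvd_iff dvd_rfl]
    exact ⟨fun h => le_antisymm hm'q (Nat.le_of_dvd hm'pos h), fun h => h ▸ dvd_rfl⟩
  rw [sum_choose_modEq_eq_of_modEq m hm hm'pos.ne' hm'm.symm,
    filter_congr fun k _ => ⟨fun h => h.trans hm'm.symm, fun h => h.trans hm'm⟩,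
    if_congr hdvd rfl rfl]
  exact_mod_cast
    congrArg (Nat.cast : ℕ → ZMod p) (Nat.sum_choose_modEq_self_of_le hm'pos hm'q)

end ZMod

/-- For `p ≤ r`, `r ≡ a mod (p-1)`, `1 ≤ a ≤ n ≤ p-1`:
`∑_{0 < l < r, l ≡ a mod (p-1)} C(r,l)C(l,n) ≡ δ_{n,a}·C(r,a) mod p`. -/
theorem stmt_11 (p r a n : ℕ) [Fact p.Prime] (hr : p ≤ r)
    (hra : r % (p - 1) = a % (p - 1)) (ha : 1 ≤ a) (han : a ≤ n) (hn : n ≤ p - 1) :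
    (∑ l ∈ Finset.Ioo 0 r,
        if l % (p - 1) = a % (p - 1) then (r.choose l * l.choose n : ZMod p) else 0) =
      if n = a then (r.choose a : ZMod p) else 0 := by
  have hnr : n < r := by omega
  have hclass : ∀ k, (n + k) % (p - 1) = a % (p - 1) ↔ k ≡ r - n [MOD p - 1] := by
    have hr' : a ≡ n + (r - n) [MOD p - 1] := by rw [Nat.add_sub_cancel' hnr.le]; exact hra.symm
    exact fun k => ⟨fun h => Nat.ModEq.add_left_cancel' n (h.trans hr'),
      fun h => (h.add_left n).trans hr'.symm⟩
  have hdvd : p - 1 ∣ r - n ↔ n = a := by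
    rw [← Nat.modEq_iff_dvd' hnr.le, show n ≡ r [MOD p - 1] ↔ a ≡ n [MOD p - 1] from
      ⟨fun h => (h.trans hra).symm, fun h => h.symm.trans hra.symm⟩, Nat.modEq_iff_dvd' han]
    exact ⟨fun h => by have := Nat.eq_zero_of_dvd_of_lt h (by omega); omega,
      fun h => by simp [h]⟩
  set f : ℕ → ZMod p := fun l =>
    if l % (p - 1) = a % (p - 1) then (r.choose l * l.choose n : ZMod p) else 0 with hf
  have hfull : ∑ l ∈ range (r + 1), f l = (∑ l ∈ Ioo 0 r, f l) + r.choose n := by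
    rw [sum_range_succ, range_eq_Ico, sum_eq_sum_Ico_succ_bot hnr.pos, Ico_add_one_left_eq_Ioo]
    simp [hf, Nat.choose_eq_zero_of_lt (by omega : 0 < n), hra]
  have hsum : ∑ l ∈ range (r + 1), f l = r.choose n * if n = a then 2 else 1 := by
    have := congrArg (Nat.cast : ℕ → ZMod p)
      (Nat.sum_filter_choose_mul_choose (fun l => l % (p - 1) = a % (p - 1)) hnr.le)
    push_cast at this
    rwa [sum_filter, filter_congr fun k _ => hclass k, ZMod.sum_choose_modEq_self (by omega),
      if_congr hdvd rfl rfl] at this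
  rw [hfull] at hsum
  split_ifs at hsum ⊢ with h
  · subst h
    linear_combination hsum
  · linear_combination hsum
end

section
/- Let p ≤ r with r ≡ a mod (p-1) and 1 ≤ a ≤ p-1. Then ∑_{0 < l < r, l ≡ a mod (p-1)} C(r,l) ≡ 0 mod p. -/
/-!
Pair the binomial expansion of `x ^ c * (1 + x) ^ n` with the character sum
`∑_{x ∈ 𝔽_p^×} x ^ i = -[p - 1 ∣ i]`: summing over the units picks out the coefficients
`C(n, l)` with `l` in one residue class mod `p - 1`, up to sign. By Fermat, `(1 + x) ^ n` only
depends on `n` mod `p - 1` when `n ≥ 1`, hence so do these residue-class sums. Comparing the sum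
for `n` with the one for the representative `m ∈ [1, p - 1]` of `n`, whose interior terms vanish,
kills the interior terms for `n` as well.
-/

open Finset

theorem Finset.sum_range_succ_eq_add_sum_Ioo_add {M : Type*} [AddCommMonoid M] (f : ℕ → M)
    {n : ℕ} (hn : 0 < n) : ∑ l ∈ range (n + 1), f l = f 0 + ∑ l ∈ Ioo 0 n, f l + f n := by
  rw [sum_range_succ, range_eq_Ico, add_sum_Ioo_eq_sum_Ico hn]

theorem Nat.dvd_sub_mod_add_iff {q : ℕ} (hq : 0 < q) (b l : ℕ) :
    q ∣ q - b % q + l ↔ l % q = b % q := by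
  have hb : b % q ≤ q := (Nat.mod_lt b hq).le
  have hsum : q - b % q + b % q ≡ 0 [MOD q] := by
    rw [Nat.sub_add_cancel hb]; exact Nat.modEq_zero_iff_dvd.mpr dvd_rfl
  rw [← Nat.modEq_zero_iff_dvd]
  constructor
  · intro h
    simpa [Nat.ModEq, Nat.mod_mod] using Nat.ModEq.add_left_cancel' _ (h.trans hsum.symm)
  · intro h
    refine Nat.ModEq.trans (Nat.ModEq.add_left _ ?_) hsum
    simpa [Nat.ModEq, Nat.mod_mod] using h

namespace ZMod

variable {p : ℕ} [Fact p.Prime]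

theorem pow_eq_pow_of_mod_eq (y : ZMod p) {m n : ℕ} (hm : m ≠ 0) (hn : n ≠ 0)
    (h : m % (p - 1) = n % (p - 1)) : y ^ m = y ^ n := by
  rcases eq_or_ne y 0 with rfl | hy
  · rw [zero_pow hm, zero_pow hn]
  · have hmod (k : ℕ) : y ^ k = y ^ (k % (p - 1)) := by
      conv_lhs => rw [← Nat.div_add_mod k (p - 1)]
      rw [pow_add, pow_mul, pow_card_sub_one_eq_one hy, one_pow, one_mul]
    rw [hmod m, hmod n, h]

theorem sum_units_pow_mul_one_add_pow (c n : ℕ) :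
    ∑ x : (ZMod p)ˣ, (x : ZMod p) ^ c * (1 + x) ^ n =
      -∑ l ∈ range (n + 1), if p - 1 ∣ c + l then (n.choose l : ZMod p) else 0 := by
  have hexpand (x : ZMod p) :
      x ^ c * (1 + x) ^ n = ∑ l ∈ range (n + 1), (n.choose l : ZMod p) * x ^ (c + l) := by
    rw [add_comm 1 x, add_pow, mul_sum]
    refine sum_congr rfl fun l _ => ?_
    rw [one_pow, pow_add]
    ring
  simp only [hexpand, sum_comm (γ := (ZMod p)ˣ), ← mul_sum, ← sum_neg_distrib]
  refine sum_congr rfl fun l _ => ?_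
  have hunits := FiniteField.sum_pow_units (ZMod p) (c + l)
  rw [card] at hunits
  rw [hunits]
  split_ifs <;> simp

theorem sum_range_choose_mod_eq_eq_of_mod_eq (b : ℕ) {m n : ℕ} (hm : m ≠ 0) (hn : n ≠ 0)
    (h : m % (p - 1) = n % (p - 1)) :
    ∑ l ∈ range (m + 1), (if l % (p - 1) = b % (p - 1) then (m.choose l : ZMod p) else 0) =
      ∑ l ∈ range (n + 1), if l % (p - 1) = b % (p - 1) then (n.choose l : ZMod p) else 0 := by
  have hq : 0 < p - 1 := Nat.sub_pos_of_lt (Fact.out : p.Prime).one_lt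
  simp only [← Nat.dvd_sub_mod_add_iff hq b]
  rw [← neg_inj, ← sum_units_pow_mul_one_add_pow, ← sum_units_pow_mul_one_add_pow]
  simp only [pow_eq_pow_of_mod_eq _ hm hn h]

theorem sum_Ioo_choose_mod_eq_self (n : ℕ) :
    ∑ l ∈ Ioo 0 n, (if l % (p - 1) = n % (p - 1) then (n.choose l : ZMod p) else 0) = 0 := by
  rcases Nat.eq_zero_or_pos n with rfl | hn
  · simp
  set q := p - 1
  have hq : 0 < q := Nat.sub_pos_of_lt (Fact.out : p.Prime).one_lt
  set m := (n - 1) % q + 1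
  have hmq : m ≤ q := Nat.mod_lt _ hq
  have hmn : m % q = n % q := by
    have := ((Nat.mod_modEq (n - 1) q).add_right 1)
    rwa [Nat.sub_add_cancel hn] at this
  have hends {k : ℕ} (hk : 0 < k) (hkn : k % q = n % q) :
      ∑ l ∈ range (k + 1), (if l % q = n % q then (k.choose l : ZMod p) else 0) =
        (if 0 % q = n % q then 1 else 0) + ∑ l ∈ Ioo 0 k,
          (if l % q = n % q then (k.choose l : ZMod p) else 0) + 1 := by
    rw [sum_range_succ_eq_add_sum_Ioo_add _ hk, if_pos hkn]
    simp only [Nat.choose_zero_right, Nat.choose_self, Nat.cast_one]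
  have hmid : ∑ l ∈ Ioo 0 m, (if l % q = n % q then (m.choose l : ZMod p) else 0) = 0 := by
    refine sum_eq_zero fun l hl => if_neg ?_
    rw [mem_Ioo] at hl
    rw [← hmn, Nat.mod_eq_of_lt (hl.2.trans_le hmq)]
    rcases hmq.lt_or_eq with hlt | heq
    · rw [Nat.mod_eq_of_lt hlt]; omega
    · rw [heq, Nat.mod_self]; omega
  have hperiodic :=
    sum_range_choose_mod_eq_eq_of_mod_eq (p := p) (m := m) n (Nat.succ_ne_zero _) hn.ne' hmn
  rw [hends (Nat.succ_pos _) hmn, hends hn rfl, hmid] at hperiodic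
  linear_combination -hperiodic

end ZMod

theorem stmt_12_general (p r a : ℕ) [Fact p.Prime]
    (hra : r % (p - 1) = a % (p - 1)) :
    (∑ l ∈ Finset.Ioo 0 r,
        if l % (p - 1) = a % (p - 1) then (r.choose l : ZMod p) else 0) = 0 := by
  rw [← hra]
  exact ZMod.sum_Ioo_choose_mod_eq_self r

/-- For `p ≤ r`, `r ≡ a mod (p-1)`, `1 ≤ a ≤ p-1`:
`∑_{0 < l < r, l ≡ a mod (p-1)} C(r,l) ≡ 0 mod p`. -/
theorem stmt_12 (p r a : ℕ) [Fact p.Prime] (hr : p ≤ r)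
    (hra : r % (p - 1) = a % (p - 1)) (ha1 : 1 ≤ a) (ha2 : a ≤ p - 1) :
    (∑ l ∈ Finset.Ioo 0 r,
        if l % (p - 1) = a % (p - 1) then (r.choose l : ZMod p) else 0) = 0 :=
  stmt_12_general p r a hra
end

section
/- Let p be an odd prime, 1 ≤ a ≤ p-1 and 1 ≤ i with 2i < a (so i < a-i). Let r ≥ p with r ≡ r_0 mod p, 0 ≤ r_0 ≤ p-1. Then C(r-(a-i)-1, i) ≡ 0 mod p if and only if r_0 ∈ {a-i+1, a-i+2, ..., a-1, a}. -/
/-- By Lucas, `C(n, k) ≡ C(n % p, k)` for `k < p`, and `p ∤ C(m, k)` when `k ≤ m < p`. -/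
theorem Nat.choose_cast_zmod_eq_zero_iff {p n k : ℕ} [hp : Fact p.Prime] (hk : k < p) :
    (n.choose k : ZMod p) = 0 ↔ n % p < k := by
  have lucas : (n.choose k : ZMod p) = ((n % p).choose k : ZMod p) := by
    rw [ZMod.natCast_eq_natCast_iff]
    simpa [Nat.mod_eq_of_lt hk, Nat.div_eq_of_lt hk] using
      Choose.choose_modEq_choose_mod_mul_choose_div_nat (n := n) (k := k) (p := p)
  rw [lucas, ZMod.natCast_eq_zero_iff]
  refine ⟨fun hdvd => ?_, fun hlt => by rw [Nat.choose_eq_zero_of_lt hlt]; exact dvd_zero p⟩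
  by_contra! hle
  have hcop := hp.out.coprime_choose_of_lt (Nat.mod_lt n hp.out.pos) hle
  exact hp.out.one_lt.ne' (hcop.eq_one_of_dvd hdvd)

theorem Nat.sub_sub_one_mod_lt_iff {p r s i : ℕ} (hsi : s + i < p) (hr : p ≤ r) :
    (r - s - 1) % p < i ↔ s < r % p ∧ r % p ≤ s + i := by
  obtain ⟨q, hq⟩ : ∃ q, r = p * (q + 1) + r % p :=
    ⟨r / p - 1, by rw [Nat.sub_add_cancel (Nat.div_pos hr (by omega)), Nat.div_add_mod]⟩
  have hrp : r % p < p := Nat.mod_lt r (by omega)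
  -- shifting by one full period keeps the subtraction inside ℕ
  have hshift : (r - s - 1) % p = (p + r % p - s - 1) % p := by
    have hmul : p * (q + 1) = p * q + p := Nat.mul_succ p q
    rw [show r - s - 1 = p + r % p - s - 1 + p * q by omega, Nat.add_mul_mod_self_left]
  rw [hshift]
  by_cases hs : s < r % p
  · rw [Nat.mod_eq_sub_mod (by omega), Nat.mod_eq_of_lt (by omega)]
    omega
  · rw [Nat.mod_eq_of_lt (by omega)]
    omega

theorem stmt_14_general (p r a i : ℕ) (hp : p.Prime)
    (ha2 : a ≤ p - 1) (hia : 2 * i < a) (hr : p ≤ r) :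
    ((r - (a - i) - 1).choose i : ZMod p) = 0 ↔
      a - i + 1 ≤ r % p ∧ r % p ≤ a := by
  have := Fact.mk hp
  rw [Nat.choose_cast_zmod_eq_zero_iff (by omega), Nat.sub_sub_one_mod_lt_iff (by omega) hr]
  omega

/-- For `p ≥ 3`, `1 ≤ a ≤ p-1`, `1 ≤ i` with `2i < a`, and `p ≤ r` with `r_0 = r % p`:
`C(r-(a-i)-1, i) ≡ 0 mod p` iff `r_0 ∈ {a-i+1, …, a}`. -/
theorem stmt_14 (p r a i : ℕ) (hp : p.Prime) (hp3 : 3 ≤ p) (ha1 : 1 ≤ a)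
    (ha2 : a ≤ p - 1) (hi : 1 ≤ i) (hia : 2 * i < a) (hr : p ≤ r) :
    ((r - (a - i) - 1).choose i : ZMod p) = 0 ↔
      a - i + 1 ≤ r % p ∧ r % p ≤ a :=
  stmt_14_general p r a i hp ha2 hia hr
end

section
/- Let m ≥ 1 and r ≥ m(p+1) - 1. Every homogeneous polynomial of degree r in F_p[X,Y] is congruent, modulo the F_p-span of polynomials divisible by θ^m, to an F_p-linear combination of the monomials X^{r-i}Y^i for 0 ≤ i ≤ m(p+1)-(m+1) together with X^iY^{r-i} for 0 ≤ i < m. -/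
/-!
Put `x = XY^p` and `y = X^pY`, so that `θ = y - x`. Expanding `(x - y)^m` gives
`x^m ≡ -∑_{k<m} (-1)^{k+m} C(m,k) x^k y^{m-k}` modulo `θ^m`, and since `p ≥ 2` every term on
the right has smaller `Y`-degree than `x^m = X^mY^{pm}`. Multiplying by `X^aY^b`, each monomial
`X^{r-j}Y^j` with `pm ≤ j ≤ r - m` is congruent modulo `θ^m` to monomials of degree `r` with
smaller `Y`-degree, so by strong induction on `j` every monomial of degree `r` reduces to those
with `j < pm` or `r - j < m`, which are the listed ones.
-/

open MvPolynomial

section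

variable (R : Type*) [CommRing R]

noncomputable def theta (p : ℕ) : MvPolynomial (Fin 2) R :=
  X 0 ^ p * X 1 - X 0 * X 1 ^ p

noncomputable def standardModTheta (p m r : ℕ) : Submodule R (MvPolynomial (Fin 2) R) where
  carrier := {f | ∃ (b c : ℕ → R) (G : MvPolynomial (Fin 2) R), theta R p ^ m ∣ G ∧
    f = (∑ i ∈ Finset.range (m * (p + 1) - m), C (b i) * X 0 ^ (r - i) * X 1 ^ i) +
      (∑ i ∈ Finset.range m, C (c i) * X 0 ^ i * X 1 ^ (r - i)) + G}
  zero_mem' := ⟨0, 0, 0, dvd_zero _, by simp⟩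
  add_mem' := by
    rintro _ _ ⟨b, c, G, hG, rfl⟩ ⟨b', c', G', hG', rfl⟩
    refine ⟨b + b', c + c', G + G', dvd_add hG hG', ?_⟩
    simp only [Pi.add_apply, map_add, add_mul, Finset.sum_add_distrib]
    ring
  smul_mem' := by
    rintro a _ ⟨b, c, G, hG, rfl⟩
    refine ⟨a • b, a • c, C a * G, hG.mul_left _, ?_⟩
    simp only [Pi.smul_apply, smul_eq_mul, map_mul, smul_eq_C_mul, mul_add, Finset.mul_sum,
      mul_assoc]

variable {R}

lemma mem_standardModTheta_of_dvd {p m r : ℕ} {G : MvPolynomial (Fin 2) R}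
    (h : theta R p ^ m ∣ G) : G ∈ standardModTheta R p m r :=
  ⟨0, 0, G, h, by simp⟩

lemma X_pow_mul_X_pow_mem_standardModTheta_of_lt {p m r i : ℕ} (h : i < m * (p + 1) - m) :
    X 0 ^ (r - i) * X 1 ^ i ∈ standardModTheta R p m r := by
  refine ⟨Pi.single i 1, 0, 0, dvd_zero _, ?_⟩
  simp [Pi.single_apply, h]

lemma X_pow_mul_X_pow_mem_standardModTheta_of_sub_lt {p m r j : ℕ} (hjr : j ≤ r)
    (h : r - j < m) : X 0 ^ (r - j) * X 1 ^ j ∈ standardModTheta R p m r := by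
  refine ⟨0, Pi.single (r - j) 1, 0, dvd_zero _, ?_⟩
  simp [Pi.single_apply, h, Nat.sub_sub_self hjr]

lemma pow_eq_sub_pow_sub_sum (x y : R) (m : ℕ) :
    x ^ m = (x - y) ^ m -
      ∑ k ∈ Finset.range m, (-1) ^ (k + m) * x ^ k * y ^ (m - k) * (m.choose k : R) := by
  rw [sub_pow, Finset.sum_range_succ, Nat.sub_self, ← two_mul, pow_mul, neg_one_sq]
  simp only [one_pow, one_mul, pow_zero, mul_one, Nat.choose_self, Nat.cast_one]
  ring

lemma X_pow_mul_X_pow_mem_standardModTheta_of_forall_lt {p m r j : ℕ} (hp : 2 ≤ p)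
    (hpj : p * m ≤ j) (hjr : j + m ≤ r)
    (hsmaller : ∀ i < j, X 0 ^ (r - i) * X 1 ^ i ∈ standardModTheta R p m r) :
    X 0 ^ (r - j) * X 1 ^ j ∈ standardModTheta R p m r := by
  obtain ⟨a, hra⟩ : ∃ a, r - j = a + m := ⟨r - j - m, by lia⟩
  obtain ⟨b, hjb⟩ : ∃ b, j = b + p * m := ⟨j - p * m, by lia⟩
  set x : MvPolynomial (Fin 2) R := X 0 * X 1 ^ p
  set y : MvPolynomial (Fin 2) R := X 0 ^ p * X 1
  have hmono : X 0 ^ (r - j) * X 1 ^ j = X 0 ^ a * X 1 ^ b * x ^ m := by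
    rw [hra, hjb]; ring
  rw [hmono, pow_eq_sub_pow_sub_sum x y, mul_sub, Finset.mul_sum]
  refine Submodule.sub_mem _ (mem_standardModTheta_of_dvd ?_) (Submodule.sum_mem _ fun k hk => ?_)
  · have hθ : x - y = -theta R p := by simp only [theta, x, y]; ring
    rw [hθ, neg_pow]
    exact (dvd_mul_left _ _).mul_left _
  have hk : k < m := Finset.mem_range.mp hk
  have hsplit : p * k + p * (m - k) = p * m := by rw [← mul_add, Nat.add_sub_cancel' hk.le]
  have hlt : m - k < p * (m - k) := lt_mul_of_one_lt_left (by lia) (by lia)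
  set i := b + p * k + (m - k)
  have hterm : X 0 ^ a * X 1 ^ b *
      ((-1) ^ (k + m) * x ^ k * y ^ (m - k) * (m.choose k : MvPolynomial (Fin 2) R)) =
      ((-1) ^ (k + m) * (m.choose k : R)) • (X 0 ^ (r - i) * X 1 ^ i) := by
    rw [show r - i = a + k + p * (m - k) by lia, smul_eq_C_mul]
    simp only [map_mul, map_pow, map_neg, map_one, map_natCast, x, y, i]
    ring
  rw [hterm]
  exact Submodule.smul_mem _ _ (hsmaller i (by lia))

lemma X_pow_mul_X_pow_mem_standardModTheta {p : ℕ} (hp : 2 ≤ p) (m r : ℕ) :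
    ∀ j ≤ r, X 0 ^ (r - j) * X 1 ^ j ∈ standardModTheta R p m r := by
  intro j
  induction j using Nat.strong_induction_on with
  | _ j ih =>
  intro hjr
  rcases lt_or_ge j (m * (p + 1) - m) with hj | hj
  · exact X_pow_mul_X_pow_mem_standardModTheta_of_lt hj
  rcases lt_or_ge (r - j) m with hrj | hrj
  · exact X_pow_mul_X_pow_mem_standardModTheta_of_sub_lt hjr hrj
  exact X_pow_mul_X_pow_mem_standardModTheta_of_forall_lt hp (by lia) (by lia)
    fun i hi => ih i hi (by lia)

end

theorem stmt_15_general (p m r : ℕ) [Fact p.Prime]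
    (a : ℕ → ZMod p) :
    ∃ (b c : ℕ → ZMod p) (G : MvPolynomial (Fin 2) (ZMod p)),
      ((X 0 : MvPolynomial (Fin 2) (ZMod p)) ^ p * X 1 - X 0 * X 1 ^ p) ^ m ∣ G ∧
      (∑ j ∈ Finset.range (r + 1), C (a j) * X 0 ^ (r - j) * X 1 ^ j) =
        (∑ i ∈ Finset.range (m * (p + 1) - m), C (b i) * X 0 ^ (r - i) * X 1 ^ i) +
          (∑ i ∈ Finset.range m, C (c i) * X 0 ^ i * X 1 ^ (r - i)) + G := by
  change _ ∈ standardModTheta (ZMod p) p m r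
  refine Submodule.sum_mem _ fun j hj => ?_
  rw [mul_assoc, ← smul_eq_C_mul]
  exact Submodule.smul_mem _ _ <| X_pow_mul_X_pow_mem_standardModTheta
    (Fact.out : p.Prime).two_le m r j (Finset.mem_range_succ_iff.mp hj)

/-- For `m ≥ 1` and `r ≥ m(p+1)-1`, every homogeneous polynomial
`∑_{j=0}^r a_j X^{r-j}Y^j` of degree `r` over `F_p` is, modulo a polynomial divisible by
`θ^m` (`θ = X^pY - XY^p`), an `F_p`-linear combination of the monomials `X^{r-i}Y^i` for
`0 ≤ i ≤ m(p+1)-(m+1)` and `X^iY^{r-i}` for `0 ≤ i < m`. -/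
theorem stmt_15 (p m r : ℕ) [Fact p.Prime] (hm : 1 ≤ m) (hr : m * (p + 1) - 1 ≤ r)
    (a : ℕ → ZMod p) :
    ∃ (b c : ℕ → ZMod p) (G : MvPolynomial (Fin 2) (ZMod p)),
      ((X 0 : MvPolynomial (Fin 2) (ZMod p)) ^ p * X 1 - X 0 * X 1 ^ p) ^ m ∣ G ∧
      (∑ j ∈ Finset.range (r + 1), C (a j) * X 0 ^ (r - j) * X 1 ^ j) =
        (∑ i ∈ Finset.range (m * (p + 1) - m), C (b i) * X 0 ^ (r - i) * X 1 ^ i) +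
          (∑ i ∈ Finset.range m, C (c i) * X 0 ^ i * X 1 ^ (r - i)) + G :=
  stmt_15_general p m r a
end

section
/- Let p ≥ 2, 2p < r with r ≡ 1 mod (p-1) and Σ_p(r-p) = p-1. Then in F_p[X,Y]: ∑_{k=0}^{p-1} X^p (kX+Y)^{r-p} = -X^r, and ∑_{k=0}^{p-1} (X+kY)^{r-p} Y^p = -Y^r. -/
/-!
Expand `(k • a + b) ^ q` binomially and sum over `k ∈ 𝔽_p`: the coefficient of `a ^ i b ^ (q - i)`
is `C(q, i) ∑ₖ kⁱ`, which is `-C(q, i)` when `0 < i` and `p - 1 ∣ i` and `0` otherwise.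
If the base-`p` digit sum of `q` is `p - 1`, then `p - 1 ∣ q`, and for `0 < i < q` with
`p - 1 ∣ i` the digit sum of `i` is already `≥ p - 1`, so Kummer's theorem puts a factor `p` in
`C(q, i)`. Only `-a ^ q` survives; take `q = r - p`.
-/

open MvPolynomial Finset

namespace Nat

theorem sub_one_dvd_sub_digits_sum (p n : ℕ) : p - 1 ∣ n - (p.digits n).sum :=
  ⟨_, (sub_one_mul_sum_log_div_pow_eq_sub_sum_digits n).symm⟩

theorem sub_one_dvd_iff_dvd_digits_sum (p n : ℕ) : p - 1 ∣ n ↔ p - 1 ∣ (p.digits n).sum := by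
  conv_lhs => rw [← Nat.sub_add_cancel (digit_sum_le p n)]
  exact Nat.dvd_add_right (sub_one_dvd_sub_digits_sum p n)

theorem digits_sum_pos (p : ℕ) {n : ℕ} (hn : n ≠ 0) : 0 < (p.digits n).sum :=
  (Nat.pos_of_ne_zero (getLast_digit_ne_zero p hn)).trans_le <|
    List.le_sum_of_mem (List.getLast_mem _)

theorem sub_one_le_digits_sum {p n : ℕ} (hn : n ≠ 0) (h : p - 1 ∣ n) :
    p - 1 ≤ (p.digits n).sum :=
  le_of_dvd (digits_sum_pos p hn) ((sub_one_dvd_iff_dvd_digits_sum p n).mp h)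

theorem ne_zero_of_digits_sum_eq_sub_one {p n : ℕ} (hp : 1 < p)
    (hn : (p.digits n).sum = p - 1) : n ≠ 0 := by
  rintro rfl
  simp at hn
  omega

end Nat

theorem Nat.prime_dvd_choose_of_digits_sum_lt {p n k : ℕ} [Fact p.Prime] (hk : k ≤ n)
    (h : (p.digits n).sum < (p.digits k).sum + (p.digits (n - k)).sum) : p ∣ n.choose k := by
  by_contra hp
  have := sub_one_mul_padicValNat_choose_eq_sub_sum_digits (p := p) hk
  rw [padicValNat.eq_zero_of_not_dvd hp, mul_zero] at this
  omega

theorem FiniteField.sum_pow_of_ne_zero (K : Type*) [Field K] [Fintype K] {i : ℕ} (hi : i ≠ 0) :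
    ∑ x : K, x ^ i = if Fintype.card K - 1 ∣ i then -1 else 0 := by
  classical
  rw [← sum_pow_units K i, ← Fintype.sum_subtype_add_sum_subtype (· ≠ 0)]
  have hzero : ∑ x : {x : K // ¬x ≠ 0}, (x : K) ^ i = 0 :=
    sum_eq_zero fun x _ => by simp [not_not.mp x.2, hi]
  rw [hzero, add_zero]
  exact (Fintype.sum_equiv unitsEquivNeZero _ _ fun _ => rfl).symm

namespace ZMod

variable {p : ℕ} [Fact p.Prime]

theorem sum_pow_mul_choose {q i : ℕ} (hq : (p.digits q).sum = p - 1) (hi : i ≤ q) :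
    ∑ k : ZMod p, k ^ i * (q.choose i : ZMod p) = if i = q then -1 else 0 := by
  have hq0 := Nat.ne_zero_of_digits_sum_eq_sub_one (Fact.out : p.Prime).one_lt hq
  rw [← sum_mul]
  rcases eq_or_ne i q with rfl | hiq
  · have hdvd : p - 1 ∣ i := (Nat.sub_one_dvd_iff_dvd_digits_sum p i).mpr (hq ▸ dvd_rfl)
    simp [FiniteField.sum_pow_of_ne_zero _ hq0, hdvd]
  rw [if_neg hiq]
  rcases eq_or_ne i 0 with rfl | hi0
  · simp
  rw [FiniteField.sum_pow_of_ne_zero _ hi0, ZMod.card]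
  split_ifs with hdvd
  · have : p ∣ q.choose i := Nat.prime_dvd_choose_of_digits_sum_lt hi <| by
      have := Nat.sub_one_le_digits_sum hi0 hdvd
      have := Nat.digits_sum_pos p (n := q - i) (by omega)
      omega
    simp [(ZMod.natCast_eq_zero_iff _ _).mpr this]
  · exact zero_mul _

theorem sum_smul_add_pow {R : Type*} [CommRing R] [Algebra (ZMod p) R] {q : ℕ}
    (hq : (p.digits q).sum = p - 1) (a b : R) :
    ∑ k : ZMod p, (k • a + b) ^ q = -a ^ q := by
  have hexpand (k : ZMod p) : (k • a + b) ^ q =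
      ∑ i ∈ range (q + 1), (k ^ i * (q.choose i : ZMod p)) • (a ^ i * b ^ (q - i)) := by
    rw [add_pow]
    refine sum_congr rfl fun i _ => ?_
    rw [smul_pow, mul_smul, smul_mul_assoc, smul_mul_assoc, Nat.cast_smul_eq_nsmul, nsmul_eq_mul,
      mul_comm (q.choose i : R)]
  simp_rw [hexpand]
  rw [sum_comm]
  simp_rw [← sum_smul]
  rw [sum_congr rfl fun i hi => by rw [sum_pow_mul_choose hq (mem_range_succ_iff.mp hi)]]
  simp

end ZMod

theorem stmt_16_general (p r : ℕ) [Fact p.Prime] (hS : (Nat.digits p (r - p)).sum = p - 1) :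
    (∑ k : ZMod p,
        (X 0 : MvPolynomial (Fin 2) (ZMod p)) ^ p * (C k * X 0 + X 1) ^ (r - p)) =
        -(X 0 : MvPolynomial (Fin 2) (ZMod p)) ^ r ∧
      (∑ k : ZMod p,
        ((X 0 : MvPolynomial (Fin 2) (ZMod p)) + C k * X 1) ^ (r - p) * X 1 ^ p) =
        -(X 1 : MvPolynomial (Fin 2) (ZMod p)) ^ r := by
  have hr : r = p + (r - p) := by
    have := Nat.ne_zero_of_digits_sum_eq_sub_one (Fact.out : p.Prime).one_lt hS
    omega
  simp_rw [C_mul']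
  constructor
  · rw [← mul_sum, ZMod.sum_smul_add_pow hS, mul_neg, ← pow_add, ← hr]
  · simp_rw [add_comm (X 0 : MvPolynomial (Fin 2) (ZMod p))]
    rw [← sum_mul, ZMod.sum_smul_add_pow hS, neg_mul, ← pow_add, add_comm, ← hr]

/-- For `2p < r`, `r ≡ 1 mod (p-1)` and `Σ_p(r-p) = p-1`, in `F_p[X,Y]`:
`∑_{k ∈ F_p} X^p (kX+Y)^{r-p} = -X^r` and `∑_{k ∈ F_p} (X+kY)^{r-p} Y^p = -Y^r`. -/
theorem stmt_16 (p r : ℕ) [Fact p.Prime] (hr : 2 * p < r)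
    (hra : r % (p - 1) = 1 % (p - 1)) (hS : (Nat.digits p (r - p)).sum = p - 1) :
    (∑ k : ZMod p,
        (X 0 : MvPolynomial (Fin 2) (ZMod p)) ^ p * (C k * X 0 + X 1) ^ (r - p)) =
        -(X 0 : MvPolynomial (Fin 2) (ZMod p)) ^ r ∧
      (∑ k : ZMod p,
        ((X 0 : MvPolynomial (Fin 2) (ZMod p)) + C k * X 1) ^ (r - p) * X 1 ^ p) =
        -(X 1 : MvPolynomial (Fin 2) (ZMod p)) ^ r :=
  stmt_16_general p r hS
end

section
/- Let p ≥ 3, 1 ≤ i < p-1 with i ≡ a - i mod (p-1) where r ≡ a mod (p-1), 1 ≤ a ≤ p-1, and suppose r ≥ i(p+1) + p and r ≡ i - 1 mod p. Then the binomial coefficient C(r-i, i) ≡ C(p-1, i) ≢ 0 mod p. -/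
/-!
Since `r ≡ i - 1 (mod p)` and `i ≤ r`, the top entry `r - i` has last base-`p` digit `p - 1`,
while `i < p` is a single digit. Lucas' theorem thus reduces `C(r - i, i)` to `C(p - 1, i)`
modulo `p`, and `p` does not divide `C(p - 1, i)` because it does not divide `(p - 1)!`.
-/

namespace Nat

theorem Prime.not_dvd_choose_of_lt {p n k : ℕ} (hp : p.Prime) (hn : n < p) (hk : k ≤ n) :
    ¬ p ∣ n.choose k := fun h =>
  absurd (hp.dvd_factorial.mp <| h.trans <| Dvd.intro (k ! * (n - k)!) <| by
    rw [← mul_assoc, choose_mul_factorial_mul_factorial hk]) (not_le.mpr hn)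

theorem choose_cast_zmod_eq_choose_mod {p : ℕ} [Fact p.Prime] (n : ℕ) {k : ℕ} (hk : k < p) :
    (n.choose k : ZMod p) = ((n % p).choose k : ZMod p) := by
  have lucas := Choose.choose_modEq_choose_mod_mul_choose_div_nat (n := n) (k := k) (p := p)
  rw [mod_eq_of_lt hk, div_eq_of_lt hk, choose_zero_right, mul_one] at lucas
  exact (ZMod.natCast_eq_natCast_iff _ _ _).mpr lucas

theorem sub_mod_eq_pred_of_mod_eq_pred {p r i : ℕ} (hi : 1 ≤ i) (hir : i ≤ r)
    (hrp : r % p = i - 1) : (r - i) % p = p - 1 := by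
  obtain ⟨q, hr⟩ : ∃ q, r = p * q + (i - 1) := ⟨r / p, by rw [← hrp, div_add_mod]⟩
  have hq : 0 < q := Nat.pos_of_ne_zero (by rintro rfl; omega)
  have hp : 0 < p := Nat.pos_of_ne_zero (by rintro rfl; omega)
  have hpq : p ≤ p * q := Nat.le_mul_of_pos_right p hq
  have hri : r - i = p * (q - 1) + (p - 1) := by rw [mul_sub_one]; omega
  rw [hri, mul_add_mod, mod_eq_of_lt (by omega)]

end Nat

theorem stmt_18_general (p r i : ℕ) (hp : p.Prime) (hi1 : 1 ≤ i)
    (hi2 : i < p - 1)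
    (hr : i * (p + 1) + p ≤ r) (hrp : r % p = i - 1) :
    ((r - i).choose i : ZMod p) = ((p - 1).choose i : ZMod p) ∧
      ((p - 1).choose i : ZMod p) ≠ 0 := by
  have : Fact p.Prime := ⟨hp⟩
  have hip : i < p := by omega
  have hir : i ≤ r := by nlinarith
  refine ⟨?_, ?_⟩
  · rw [Nat.choose_cast_zmod_eq_choose_mod _ hip, Nat.sub_mod_eq_pred_of_mod_eq_pred hi1 hir hrp]
  · rw [Ne, ZMod.natCast_eq_zero_iff]
    exact hp.not_dvd_choose_of_lt (Nat.sub_lt hp.pos one_pos) hi2.le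

/-- For `p ≥ 3`, `1 ≤ i < p-1` with `i ≡ a-i mod (p-1)` where `r ≡ a mod (p-1)`,
`1 ≤ a ≤ p-1`, `r ≥ i(p+1)+p` and `r ≡ i-1 mod p`:
`C(r-i, i) ≡ C(p-1, i) ≢ 0 mod p`. -/
theorem stmt_18 (p r a i : ℕ) (hp : p.Prime) (hp3 : 3 ≤ p) (hi1 : 1 ≤ i)
    (hi2 : i < p - 1) (ha1 : 1 ≤ a) (ha2 : a ≤ p - 1)
    (hra : r % (p - 1) = a % (p - 1))
    (hii : (i : ℤ) ≡ (a : ℤ) - (i : ℤ) [ZMOD ((p : ℤ) - 1)])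
    (hr : i * (p + 1) + p ≤ r) (hrp : r % p = i - 1) :
    ((r - i).choose i : ZMod p) = ((p - 1).choose i : ZMod p) ∧
      ((p - 1).choose i : ZMod p) ≠ 0 :=
  stmt_18_general p r i hp hi1 hi2 hr hrp
end
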